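/- arXiv:1803.11075 — 7 statements merged into one kernel-verified Lean document; each statement's English description precedes it below -/
import Mathlib

section
/- Let A be a C*-algebra and C a subcone of A⁺ satisfying: if a ∈ C and x ∈ Ã then x*ax ∈ C, and C is hereditary. If C is symmetric, meaning x*x ∈ C implies xx* ∈ C for all x ∈ A, then the linear span of C is a symmetric hereditary ideal (x*x in the span implies xx* in the span). -/
open scoped NNReal ComplexConjugate

/-!
An element `z` of the span of `C` is a finite sum `∑ λᵢ cᵢ` with `cᵢ ∈ C`, so for every `a : ℂ`
the real part `a z + conj a z*` is bounded above by `|a| c` with `c = 2 ∑ |λᵢ| cᵢ ∈ C ∪ {0}`.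
For `z = x*x ≥ 0` and `a = 1` this gives `x*x ≤ c`, so `x*x ∈ C` by heredity (or `x = 0`),
and symmetry of `C` puts `xx*` in `C`.
-/

section SymmetricCone

variable {A : Type*} [NonUnitalCStarAlgebra A] [PartialOrder A] [StarOrderedRing A]

lemma smul_add_conj_smul_le_of_nonneg {w : A} (hw : 0 ≤ w) (a : ℂ) :
    a • w + conj a • w ≤ ‖a‖ • (w + w) := by
  have hre : a • w + conj a • w = (2 * a.re) • w := by
    rw [← add_smul, Complex.add_conj, ← Complex.coe_smul]
  have hnorm : ‖a‖ • (w + w) = (2 * ‖a‖) • w := by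
    rw [← two_smul ℝ w, smul_smul, mul_comm]
  rw [hre, hnorm]
  exact smul_le_smul_of_nonneg_right (by linarith [Complex.re_le_norm a]) hw

/-- Quantifying over all `a : ℂ` makes the bound on `2 Re (a z)` stable under complex scalars. -/
lemma exists_smul_add_conj_smul_star_le_of_mem_span {C : Set A}
    (hCpos : ∀ a ∈ C, 0 ≤ a) (hCadd : ∀ a ∈ C, ∀ b ∈ C, a + b ∈ C)
    (hCsmul : ∀ a ∈ C, ∀ r : ℝ≥0, ((r : ℂ) • a) ∈ C) {z : A} (hz : z ∈ Submodule.span ℂ C) :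
    ∃ c ∈ insert 0 C, ∀ a : ℂ, a • z + conj a • star z ≤ ‖a‖ • c := by
  induction hz using Submodule.span_induction with
  | mem w hw =>
    refine ⟨w + w, Or.inr (hCadd w hw w hw), fun a => ?_⟩
    rw [(hCpos w hw).isSelfAdjoint.star_eq]
    exact smul_add_conj_smul_le_of_nonneg (hCpos w hw) a
  | zero => exact ⟨0, Set.mem_insert 0 C, fun a => by simp⟩
  | add z₁ z₂ _ _ ih₁ ih₂ =>
    obtain ⟨c₁, hc₁, hle₁⟩ := ih₁
    obtain ⟨c₂, hc₂, hle₂⟩ := ih₂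
    refine ⟨c₁ + c₂, ?_, fun a => ?_⟩
    · rcases hc₁ with rfl | hc₁ <;> rcases hc₂ with rfl | hc₂
      · simp
      · simpa using Or.inr hc₂
      · simpa using Or.inr hc₁
      · exact Or.inr (hCadd _ hc₁ _ hc₂)
    · calc a • (z₁ + z₂) + conj a • star (z₁ + z₂)
          = (a • z₁ + conj a • star z₁) + (a • z₂ + conj a • star z₂) := by
            rw [star_add, smul_add, smul_add]; abel
        _ ≤ ‖a‖ • c₁ + ‖a‖ • c₂ := add_le_add (hle₁ a) (hle₂ a)
        _ = ‖a‖ • (c₁ + c₂) := (smul_add _ _ _).symm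
  | smul b z _ ih =>
    obtain ⟨c, hc, hle⟩ := ih
    refine ⟨(‖b‖₊ : ℂ) • c, ?_, fun a => ?_⟩
    · rcases hc with rfl | hc
      · exact Or.inl (smul_zero _)
      · exact Or.inr (hCsmul c hc ‖b‖₊)
    · calc a • b • z + conj a • star (b • z) = (a * b) • z + conj (a * b) • star z := by
            rw [star_smul, smul_smul, smul_smul, map_mul, Complex.star_def]
        _ ≤ ‖a * b‖ • c := hle (a * b)
        _ = ‖a‖ • (‖b‖₊ : ℂ) • c := by
            rw [norm_mul, mul_smul, ← Complex.coe_smul]; rfl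

lemma mem_insert_zero_of_nonneg_of_mem_span {C : Set A}
    (hCpos : ∀ a ∈ C, 0 ≤ a) (hCadd : ∀ a ∈ C, ∀ b ∈ C, a + b ∈ C)
    (hCsmul : ∀ a ∈ C, ∀ r : ℝ≥0, ((r : ℂ) • a) ∈ C)
    (hC2 : ∀ a b : A, 0 ≤ a → a ≤ b → b ∈ C → a ∈ C)
    {y : A} (hy : 0 ≤ y) (hyC : y ∈ Submodule.span ℂ C) : y ∈ insert 0 C := by
  obtain ⟨c, hc, hle⟩ := exists_smul_add_conj_smul_star_le_of_mem_span hCpos hCadd hCsmul hyC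
  have hyc : y ≤ c := by
    have h := hle 1
    rw [hy.isSelfAdjoint.star_eq, map_one, one_smul, norm_one, one_smul] at h
    exact (le_add_of_nonneg_left hy).trans h
  rcases hc with rfl | hc
  · exact Or.inl (le_antisymm hyc hy)
  · exact Or.inr (hC2 y c hy hyc hc)

end SymmetricCone

theorem stmt1_general {A : Type*} [NonUnitalCStarAlgebra A] [PartialOrder A] [StarOrderedRing A]
    (C : Set A)
    (hCpos : ∀ a ∈ C, 0 ≤ a)
    (hCadd : ∀ a ∈ C, ∀ b ∈ C, a + b ∈ C)
    (hCsmul : ∀ a ∈ C, ∀ r : ℝ≥0, ((r : ℂ) • a) ∈ C)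
    (hC2 : ∀ a b : A, 0 ≤ a → a ≤ b → b ∈ C → a ∈ C)
    (hCsym : ∀ x : A, star x * x ∈ C → x * star x ∈ C) :
    ∀ x : A, star x * x ∈ Submodule.span ℂ C → x * star x ∈ Submodule.span ℂ C := by
  intro x hx
  rcases mem_insert_zero_of_nonneg_of_mem_span hCpos hCadd hCsmul hC2
      (star_mul_self_nonneg x) hx with h0 | hxC
  · rw [(CStarRing.star_mul_self_eq_zero_iff x).mp h0, zero_mul]
    exact Submodule.zero_mem _
  · exact Submodule.subset_span (hCsym x hxC)

/-- If the hereditary subcone `C` (closed under conjugation by elements of the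
unitization) is symmetric (`x*x ∈ C → xx* ∈ C`), then its linear span is a symmetric ideal:
`x*x` in the span implies `xx*` in the span. -/
theorem stmt1 {A : Type*} [NonUnitalCStarAlgebra A] [PartialOrder A] [StarOrderedRing A]
    (C : Set A)
    (hCpos : ∀ a ∈ C, 0 ≤ a)
    (hCadd : ∀ a ∈ C, ∀ b ∈ C, a + b ∈ C)
    (hCsmul : ∀ a ∈ C, ∀ r : ℝ≥0, ((r : ℂ) • a) ∈ C)
    (hC1 : ∀ a ∈ C, ∀ x : Unitization ℂ A, ∃ b ∈ C,
      (b : Unitization ℂ A) = star x * (a : Unitization ℂ A) * x)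
    (hC2 : ∀ a b : A, 0 ≤ a → a ≤ b → b ∈ C → a ∈ C)
    (hCsym : ∀ x : A, star x * x ∈ C → x * star x ∈ C) :
    ∀ x : A, star x * x ∈ Submodule.span ℂ C → x * star x ∈ Submodule.span ℂ C :=
  stmt1_general C hCpos hCadd hCsmul hC2 hCsym
end

section
/- Let G be a group acting on a C*-algebra A, let I be a G-invariant hereditary symmetric ideal, and let e ∈ I be positive. Then for every self-adjoint a in the smallest G-invariant symmetric hereditary ideal containing e, there exist n ≥ 1 and t₁,...,tₙ ∈ G such that τ(a) ≤ Σⱼ τ(α_{tⱼ}(e)) for all positive linear traces τ with domain I. -/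
/-!
Let `S` be the set of positive `s ∈ I` for which finitely many `t₁, …, tₙ ∈ G` satisfy
`‖τ s‖ ≤ Σⱼ Re τ(tⱼ • e)` for every trace `τ` on `I`, and let `J` be the span of `S`.
Every element of `J` is dominated in the same way, and `J` contains `e`, is `G`-invariant
(`τ ∘ α_t` is again a trace), hereditary (traces are monotone) and symmetric
(`τ (x* x) = τ (x x*)`). It is an ideal: with `r = √s`, polarization writes `y s = (r y*)* r` as a
combination of elements `w* w` with `w = r (1 + c y*)`, and
`τ (w* w) = τ (w w*) ≤ ‖(1 + c y*) (1 + c y*)*‖ τ s`, the norm taken in the unitization.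
Minimality then puts `a` in `J`.
-/

open ComplexOrder

structure IsTraceOn {A : Type*} [NonUnitalRing A] [StarRing A] [Module ℂ A] [PartialOrder A]
    (I : Submodule ℂ A) (τ : A → ℂ) : Prop where
  map_add : ∀ x ∈ I, ∀ y ∈ I, τ (x + y) = τ x + τ y
  map_smul : ∀ c : ℂ, ∀ x ∈ I, τ (c • x) = c * τ x
  nonneg : ∀ x ∈ I, 0 ≤ x → 0 ≤ τ x
  star_mul_comm : ∀ x : A, star x * x ∈ I → τ (star x * x) = τ (x * star x)

namespace IsTraceOn

variable {A : Type*} [NonUnitalRing A] [StarRing A] [Module ℂ A] [PartialOrder A]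
  {I : Submodule ℂ A} {τ : A → ℂ}

lemma map_zero (hτ : IsTraceOn I τ) : τ 0 = 0 := by
  simpa using hτ.map_smul 0 0 I.zero_mem

lemma norm_eq_re (hτ : IsTraceOn I τ) {x : A} (hx : x ∈ I) (hx0 : 0 ≤ x) :
    ‖τ x‖ = (τ x).re := by
  simpa using congrArg Complex.re (Complex.norm_of_nonneg' (hτ.nonneg x hx hx0))

variable [StarOrderedRing A]

lemma re_mono (hτ : IsTraceOn I τ) {x y : A} (hx : x ∈ I) (hy : y ∈ I) (hxy : x ≤ y) :
    (τ x).re ≤ (τ y).re := by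
  have hsplit := congrArg Complex.re (hτ.map_add x hx (y - x) (sub_mem hy hx))
  have hdiff := hτ.norm_eq_re (sub_mem hy hx) (sub_nonneg.mpr hxy)
  rw [add_sub_cancel, Complex.add_re] at hsplit
  linarith [norm_nonneg (τ (y - x))]

lemma comp (hτ : IsTraceOn I τ) (φ : A →⋆ₙₐ[ℂ] A) (hφ : ∀ x ∈ I, φ x ∈ I) :
    IsTraceOn I (τ ∘ φ) where
  map_add x hx y hy := by
    rw [Function.comp_apply, _root_.map_add]
    exact hτ.map_add _ (hφ x hx) _ (hφ y hy)
  map_smul c x hx := by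
    rw [Function.comp_apply, _root_.map_smul]
    exact hτ.map_smul c _ (hφ x hx)
  nonneg x hx hx0 := hτ.nonneg _ (hφ x hx) (map_nonneg φ hx0)
  star_mul_comm x hx := by
    have := hτ.star_mul_comm (φ x) (by simpa only [map_mul, map_star] using hφ _ hx)
    simpa only [Function.comp_apply, map_mul, map_star] using this

end IsTraceOn

lemma star_mul_mem_of_forall_star_mul_self_mem {A : Type*} [NonUnitalRing A] [StarRing A]
    [Module ℂ A] [StarModule ℂ A] [IsScalarTower ℂ A A] [SMulCommClass ℂ A A]
    (P : Submodule ℂ A) (u v : A) (h : ∀ c : ℂ, star (v + c • u) * (v + c • u) ∈ P) :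
    star u * v ∈ P := by
  have polarization : star u * v =
      (4 : ℂ)⁻¹ • (star (v + (1 : ℂ) • u) * (v + (1 : ℂ) • u)) +
      ((4 : ℂ)⁻¹ * Complex.I) • (star (v + Complex.I • u) * (v + Complex.I • u)) +
      (-(4 : ℂ)⁻¹) • (star (v + (-1 : ℂ) • u) * (v + (-1 : ℂ) • u)) +
      (-((4 : ℂ)⁻¹ * Complex.I)) • (star (v + (-Complex.I) • u) * (v + (-Complex.I) • u)) := by
    simp only [star_add, star_smul, mul_add, add_mul, smul_mul_assoc, mul_smul_comm,
      Complex.star_def, map_one, map_neg, Complex.conj_I]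
    match_scalars <;> (ring_nf; try norm_num [Complex.I_sq])
  rw [polarization]
  exact add_mem (add_mem (add_mem (P.smul_mem _ (h _)) (P.smul_mem _ (h _)))
    (P.smul_mem _ (h _))) (P.smul_mem _ (h _))

lemma exists_mul_add_smul_mul_star_le {A : Type*} [NonUnitalCStarAlgebra A] [PartialOrder A]
    [StarOrderedRing A] (r y : A) (c : ℂ) :
    ∃ K : ℝ, (r + c • (r * y)) * star (r + c • (r * y)) ≤ K • (r * star r) := by
  set z : Unitization ℂ A := 1 + c • (y : Unitization ℂ A)
  refine ⟨‖z * star z‖, ?_⟩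
  have hfactor : ((r + c • (r * y) : A) : Unitization ℂ A) = (r : Unitization ℂ A) * z := by
    simp [z, Unitization.inr_add, Unitization.inr_smul, Unitization.inr_mul, mul_add]
  rw [← Unitization.inr_le_iff _ _ (.mul_star_self _)
      ((IsSelfAdjoint.all _).smul (.mul_star_self r)),
    Unitization.inr_mul, Unitization.inr_star, hfactor, Unitization.inr_smul, Unitization.inr_mul,
    Unitization.inr_star]
  have := CStarAlgebra.star_left_conjugate_le_norm_smul (a := star (r : Unitization ℂ A))
    (b := z * star z) (.mul_star_self z)
  simpa only [star_star, star_mul, mul_assoc] using this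

section Domination

variable {A G : Type*} [NonUnitalRing A] [StarRing A] [Module ℂ A] [PartialOrder A]

def traceSum [SMul G A] (e : A) (τ : A → ℂ) (m : Multiset G) : ℝ :=
  (m.map fun t => (τ (t • e)).re).sum

variable (G) in
def TraceDominated [SMul G A] (I : Submodule ℂ A) (e x : A) : Prop :=
  ∃ m : Multiset G, ∀ τ : A → ℂ, IsTraceOn I τ → ‖τ x‖ ≤ traceSum e τ m

namespace TraceDominated

variable [SMul G A] {I : Submodule ℂ A} {e x y : A}

lemma zero : TraceDominated G I e 0 :=
  ⟨0, fun τ hτ => by simp [hτ.map_zero, traceSum]⟩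

lemma add (hx : x ∈ I) (hy : y ∈ I) (hxd : TraceDominated G I e x)
    (hyd : TraceDominated G I e y) : TraceDominated G I e (x + y) := by
  obtain ⟨m₁, h₁⟩ := hxd
  obtain ⟨m₂, h₂⟩ := hyd
  refine ⟨m₁ + m₂, fun τ hτ => ?_⟩
  calc ‖τ (x + y)‖ = ‖τ x + τ y‖ := by rw [hτ.map_add x hx y hy]
    _ ≤ ‖τ x‖ + ‖τ y‖ := norm_add_le _ _
    _ ≤ traceSum e τ (m₁ + m₂) := by
      simpa only [traceSum, Multiset.map_add, Multiset.sum_add] using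
        add_le_add (h₁ τ hτ) (h₂ τ hτ)

lemma of_norm_le (hyd : TraceDominated G I e y) (K : ℝ)
    (h : ∀ τ : A → ℂ, IsTraceOn I τ → ‖τ x‖ ≤ K * ‖τ y‖) : TraceDominated G I e x := by
  obtain ⟨m, hm⟩ := hyd
  refine ⟨⌈K⌉₊ • m, fun τ hτ => ?_⟩
  calc ‖τ x‖ ≤ K * ‖τ y‖ := h τ hτ
    _ ≤ ⌈K⌉₊ * ‖τ y‖ := mul_le_mul_of_nonneg_right (Nat.le_ceil K) (norm_nonneg _)
    _ ≤ ⌈K⌉₊ * traceSum e τ m := mul_le_mul_of_nonneg_left (hm τ hτ) (Nat.cast_nonneg _)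
    _ = traceSum e τ (⌈K⌉₊ • m) := by
      simp only [traceSum, Multiset.map_nsmul, Multiset.sum_nsmul, nsmul_eq_mul]

lemma smul (hx : x ∈ I) (hxd : TraceDominated G I e x) (c : ℂ) :
    TraceDominated G I e (c • x) :=
  hxd.of_norm_le ‖c‖ fun τ hτ => by rw [hτ.map_smul c x hx, norm_mul]

end TraceDominated

variable (G) in
def dominatedPositives [SMul G A] (I : Submodule ℂ A) (e : A) : Set A :=
  {s | s ∈ I ∧ 0 ≤ s ∧ TraceDominated G I e s}

variable (G) in
def dominatedIdeal [SMul G A] (I : Submodule ℂ A) (e : A) : Submodule ℂ A :=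
  Submodule.span ℂ (dominatedPositives G I e)

lemma mem_and_traceDominated_of_mem_dominatedIdeal [SMul G A] {I : Submodule ℂ A} {e x : A}
    (hx : x ∈ dominatedIdeal G I e) : x ∈ I ∧ TraceDominated G I e x := by
  induction hx using Submodule.span_induction with
  | mem s hs => exact ⟨hs.1, hs.2.2⟩
  | zero => exact ⟨I.zero_mem, .zero⟩
  | add x y _ _ hx hy => exact ⟨add_mem hx.1 hy.1, hx.2.add hx.1 hy.1 hy.2⟩
  | smul c x _ hx => exact ⟨I.smul_mem c hx.1, hx.2.smul hx.1 c⟩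

end Domination

section DominatedIdeal

variable {A G : Type*} [NonUnitalCStarAlgebra A] [PartialOrder A] [StarOrderedRing A]
  {I : Submodule ℂ A} {e x : A}

section SMul

variable [SMul G A]

lemma star_mem_dominatedIdeal (hx : x ∈ dominatedIdeal G I e) :
    star x ∈ dominatedIdeal G I e := by
  induction hx using Submodule.span_induction with
  | mem s hs => rw [(IsSelfAdjoint.of_nonneg hs.2.1).star_eq]; exact Submodule.subset_span hs
  | zero => rw [star_zero]; exact zero_mem _
  | add x y _ _ hx hy => rw [star_add]; exact add_mem hx hy
  | smul c x _ hx => rw [star_smul]; exact Submodule.smul_mem _ _ hx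

lemma mem_dominatedIdeal_of_le (hIher : ∀ a b : A, 0 ≤ a → a ≤ b → b ∈ I → a ∈ I)
    {a b : A} (ha : 0 ≤ a) (hab : a ≤ b) (hb : b ∈ dominatedIdeal G I e) :
    a ∈ dominatedIdeal G I e := by
  obtain ⟨hbI, hbd⟩ := mem_and_traceDominated_of_mem_dominatedIdeal hb
  have haI := hIher a b ha hab hbI
  refine Submodule.subset_span ⟨haI, ha, hbd.of_norm_le 1 fun τ hτ => ?_⟩
  rw [one_mul, hτ.norm_eq_re haI ha]
  exact (hτ.re_mono haI hbI hab).trans (Complex.re_le_norm _)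

lemma mul_star_self_mem_dominatedIdeal (hIsym : ∀ x : A, star x * x ∈ I → x * star x ∈ I)
    (hx : star x * x ∈ dominatedIdeal G I e) : x * star x ∈ dominatedIdeal G I e := by
  obtain ⟨hxI, hxd⟩ := mem_and_traceDominated_of_mem_dominatedIdeal hx
  refine Submodule.subset_span ⟨hIsym x hxI, mul_star_self_nonneg x, hxd.of_norm_le 1 ?_⟩
  intro τ hτ
  rw [one_mul, hτ.star_mul_comm x hxI]

lemma star_mul_self_mem_dominatedPositives (hIher : ∀ a b : A, 0 ≤ a → a ≤ b → b ∈ I → a ∈ I)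
    (hIsym : ∀ x : A, star x * x ∈ I → x * star x ∈ I) {s w : A}
    (hs : s ∈ dominatedPositives G I e) {K : ℝ} (hw : w * star w ≤ K • s) :
    star w * w ∈ dominatedPositives G I e := by
  obtain ⟨hsI, hs0, hsd⟩ := hs
  have hKsI : K • s ∈ I := by rw [← Complex.coe_smul]; exact I.smul_mem _ hsI
  have hwI : w * star w ∈ I := hIher _ _ (mul_star_self_nonneg w) hw hKsI
  have hwI' : star w * w ∈ I := by simpa using hIsym (star w) (by simpa using hwI)
  refine ⟨hwI', star_mul_self_nonneg w, hsd.of_norm_le K fun τ hτ => ?_⟩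
  calc ‖τ (star w * w)‖ = (τ (w * star w)).re := by
        rw [hτ.star_mul_comm w hwI', hτ.norm_eq_re hwI (mul_star_self_nonneg w)]
    _ ≤ (τ (K • s)).re := hτ.re_mono hwI hKsI hw
    _ = K * ‖τ s‖ := by
        rw [← Complex.coe_smul, hτ.map_smul _ s hsI, Complex.re_ofReal_mul,
          hτ.norm_eq_re hsI hs0]

lemma mul_mem_dominatedIdeal_of_mem_dominatedPositives
    (hIher : ∀ a b : A, 0 ≤ a → a ≤ b → b ∈ I → a ∈ I)
    (hIsym : ∀ x : A, star x * x ∈ I → x * star x ∈ I) {s : A}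
    (hs : s ∈ dominatedPositives G I e) (y : A) : y * s ∈ dominatedIdeal G I e := by
  set r := CFC.sqrt s
  have hr : star r = r := (IsSelfAdjoint.of_nonneg (CFC.sqrt_nonneg s)).star_eq
  have hrr : r * r = s := CFC.sqrt_mul_sqrt_self s hs.2.1
  have hys : y * s = star (r * star y) * r := by rw [star_mul, star_star, hr, mul_assoc, hrr]
  rw [hys]
  refine star_mul_mem_of_forall_star_mul_self_mem _ _ _ fun c => Submodule.subset_span ?_
  obtain ⟨K, hK⟩ := exists_mul_add_smul_mul_star_le r (star y) c
  rw [hr, hrr] at hK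
  exact star_mul_self_mem_dominatedPositives hIher hIsym hs hK

lemma mul_mem_dominatedIdeal (hIher : ∀ a b : A, 0 ≤ a → a ≤ b → b ∈ I → a ∈ I)
    (hIsym : ∀ x : A, star x * x ∈ I → x * star x ∈ I) (hx : x ∈ dominatedIdeal G I e) (y : A) :
    y * x ∈ dominatedIdeal G I e ∧ x * y ∈ dominatedIdeal G I e := by
  have hleft : ∀ x ∈ dominatedIdeal G I e, ∀ y : A, y * x ∈ dominatedIdeal G I e := by
    intro x hx
    induction hx using Submodule.span_induction with
    | mem s hs => exact mul_mem_dominatedIdeal_of_mem_dominatedPositives hIher hIsym hs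
    | zero => intro y; rw [mul_zero]; exact zero_mem _
    | add x x' _ _ hx hx' => intro y; rw [mul_add]; exact add_mem (hx y) (hx' y)
    | smul c x _ hx => intro y; rw [mul_smul_comm]; exact Submodule.smul_mem _ c (hx y)
  refine ⟨hleft x hx y, ?_⟩
  simpa using star_mem_dominatedIdeal (hleft _ (star_mem_dominatedIdeal hx) (star y))

end SMul

lemma smul_mem_dominatedIdeal [Monoid G] [DistribMulAction G A] (α : G → A →⋆ₙₐ[ℂ] A)
    (hα : ∀ t x, α t x = t • x) (hIinv : ∀ (t : G), ∀ x ∈ I, t • x ∈ I) (t : G)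
    (hx : x ∈ dominatedIdeal G I e) : t • x ∈ dominatedIdeal G I e := by
  induction hx using Submodule.span_induction with
  | mem s hs =>
    obtain ⟨hsI, hs0, m, hm⟩ := hs
    refine Submodule.subset_span ⟨hIinv t s hsI, hα t s ▸ map_nonneg (α t) hs0,
      m.map (t * ·), fun τ hτ => ?_⟩
    have hτt := hτ.comp (α t) fun x hx => (hα t x).symm ▸ hIinv t x hx
    calc ‖τ (t • s)‖ = ‖(τ ∘ α t) s‖ := by rw [Function.comp_apply, hα]
      _ ≤ traceSum e (τ ∘ α t) m := hm _ hτt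
      _ = traceSum e τ (m.map (t * ·)) := by
        simp only [traceSum, Multiset.map_map, Function.comp_def, hα, mul_smul]
  | zero => rw [smul_zero]; exact zero_mem _
  | add x y _ _ hx hy => rw [smul_add]; exact add_mem hx hy
  | smul c x _ hx => rw [← hα, map_smul, hα]; exact Submodule.smul_mem _ c hx

end DominatedIdeal

theorem stmt7_general {A G : Type*} [NonUnitalCStarAlgebra A] [PartialOrder A] [StarOrderedRing A]
    [Group G] [DistribMulAction G A]
    (hactmul : ∀ (t : G) (x y : A), t • (x * y) = (t • x) * (t • y))
    (hactstar : ∀ (t : G) (x : A), t • (star x) = star (t • x))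
    (hactsmul : ∀ (t : G) (c : ℂ) (x : A), t • (c • x) = c • (t • x))
    (I : Submodule ℂ A)
    (hIher : ∀ a b : A, 0 ≤ a → a ≤ b → b ∈ I → a ∈ I)
    (hIsym : ∀ x : A, star x * x ∈ I → x * star x ∈ I)
    (hIinv : ∀ (t : G), ∀ x ∈ I, t • x ∈ I)
    (e : A) (hepos : 0 ≤ e) (heI : e ∈ I)
    (a : A)
    (hmin : ∀ J : Submodule ℂ A,
      (∀ x ∈ J, ∀ y : A, y * x ∈ J ∧ x * y ∈ J) →
      (∀ x ∈ J, star x ∈ J) →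
      (∀ a' b : A, 0 ≤ a' → a' ≤ b → b ∈ J → a' ∈ J) →
      (∀ x : A, star x * x ∈ J → x * star x ∈ J) →
      (∀ (t : G), ∀ x ∈ J, t • x ∈ J) →
      e ∈ J → a ∈ J) :
    ∃ n : ℕ, 0 < n ∧ ∃ t : Fin n → G,
      ∀ τ : A → ℂ,
        (∀ x ∈ I, ∀ y ∈ I, τ (x + y) = τ x + τ y) →
        (∀ c : ℂ, ∀ x ∈ I, τ (c • x) = c * τ x) →
        (∀ x ∈ I, 0 ≤ x → 0 ≤ τ x) →
        (∀ x : A, star x * x ∈ I → τ (star x * x) = τ (x * star x)) →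
        (τ a).re ≤ ∑ j : Fin n, (τ (t j • e)).re := by
  let α : G → A →⋆ₙₐ[ℂ] A := fun t =>
    { toFun := (t • ·), map_smul' := hactsmul t, map_zero' := smul_zero t,
      map_add' := smul_add t, map_mul' := hactmul t, map_star' := hactstar t }
  have heJ : e ∈ dominatedIdeal G I e := Submodule.subset_span
    ⟨heI, hepos, {1}, fun τ hτ => by simp [traceSum, hτ.norm_eq_re heI hepos]⟩
  have haJ : a ∈ dominatedIdeal G I e := hmin _
    (fun _ hx y => mul_mem_dominatedIdeal hIher hIsym hx y)
    (fun _ hx => star_mem_dominatedIdeal hx)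
    (fun _ _ ha hab hb => mem_dominatedIdeal_of_le hIher ha hab hb)
    (fun _ hx => mul_star_self_mem_dominatedIdeal hIsym hx)
    (fun t _ hx => smul_mem_dominatedIdeal α (fun _ _ => rfl) hIinv t hx) heJ
  obtain ⟨m, hm⟩ := (mem_and_traceDominated_of_mem_dominatedIdeal haJ).2
  -- prepending `1` keeps the list nonempty and only adds the nonnegative term `τ e`
  set l : List G := 1 :: m.toList
  refine ⟨l.length, by simp [l], fun j => l[j.1], fun τ h₁ h₂ h₃ h₄ => ?_⟩
  have hτ : IsTraceOn I τ := ⟨h₁, h₂, h₃, h₄⟩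
  rw [Fin.sum_univ_fun_getElem l fun t => (τ (t • e)).re]
  calc (τ a).re ≤ ‖τ a‖ := Complex.re_le_norm _
    _ ≤ traceSum e τ m := hm τ hτ
    _ ≤ ‖τ e‖ + traceSum e τ m := le_add_of_nonneg_left (norm_nonneg _)
    _ = (l.map fun t => (τ (t • e)).re).sum := by
      simp [l, traceSum, hτ.norm_eq_re heI hepos]

/-- Let a group `G` act on a C*-algebra `A` by *-automorphisms, let `I` be a
`G`-invariant hereditary symmetric ideal and `e ∈ I` positive. Then every self-adjoint `a`
in the smallest `G`-invariant hereditary symmetric ideal containing `e` satisfies: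
there are `t₁,…,tₙ ∈ G` with `τ(a) ≤ Σⱼ τ(tⱼ•e)` for every positive linear trace `τ` with
domain `I`. -/
theorem stmt7 {A G : Type*} [NonUnitalCStarAlgebra A] [PartialOrder A] [StarOrderedRing A]
    [Group G] [DistribMulAction G A]
    (hactmul : ∀ (t : G) (x y : A), t • (x * y) = (t • x) * (t • y))
    (hactstar : ∀ (t : G) (x : A), t • (star x) = star (t • x))
    (hactsmul : ∀ (t : G) (c : ℂ) (x : A), t • (c • x) = c • (t • x))
    (I : Submodule ℂ A)
    (hIideal : ∀ x ∈ I, ∀ y : A, y * x ∈ I ∧ x * y ∈ I)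
    (hIstar : ∀ x ∈ I, star x ∈ I)
    (hIher : ∀ a b : A, 0 ≤ a → a ≤ b → b ∈ I → a ∈ I)
    (hIsym : ∀ x : A, star x * x ∈ I → x * star x ∈ I)
    (hIinv : ∀ (t : G), ∀ x ∈ I, t • x ∈ I)
    (e : A) (hepos : 0 ≤ e) (heI : e ∈ I)
    (a : A) (hasa : IsSelfAdjoint a)
    (hmin : ∀ J : Submodule ℂ A,
      (∀ x ∈ J, ∀ y : A, y * x ∈ J ∧ x * y ∈ J) →
      (∀ x ∈ J, star x ∈ J) →
      (∀ a' b : A, 0 ≤ a' → a' ≤ b → b ∈ J → a' ∈ J) →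
      (∀ x : A, star x * x ∈ J → x * star x ∈ J) →
      (∀ (t : G), ∀ x ∈ J, t • x ∈ J) →
      e ∈ J → a ∈ J) :
    ∃ n : ℕ, 0 < n ∧ ∃ t : Fin n → G,
      ∀ τ : A → ℂ,
        (∀ x ∈ I, ∀ y ∈ I, τ (x + y) = τ x + τ y) →
        (∀ c : ℂ, ∀ x ∈ I, τ (c • x) = c * τ x) →
        (∀ x ∈ I, 0 ≤ x → 0 ≤ τ x) →
        (∀ x : A, star x * x ∈ I → τ (star x * x) = τ (x * star x)) →
        (τ a).re ≤ ∑ j : Fin n, (τ (t j • e)).re :=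
  stmt7_general hactmul hactstar hactsmul I hIher hIsym hIinv e hepos heI a hmin
end

section
/- Let A be a C*-algebra with an approximate unit consisting of projections, and suppose that for every projection p ∈ A there is a projection q ∈ A such that the n-fold direct sum p ⊗ 1ₙ is Cuntz subequivalent to q for all n ≥ 1. Then every densely defined lower semi-continuous trace on A is zero. -/
open scoped ENNReal Matrix

/-!
Density of the span of the positive elements of finite trace makes `τ` finite on projections: a
projection `q` close to such a `y` satisfies `q ≤ q d q` for a positive `d` of finite trace
dominating `y + y*`. If `p ⊗ 1ₙ ≾ q` via `v`, the trace property gives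
`n τ(p) = Σ τ((v* v)ⱼⱼ) = Σ τ((v v*)ᵢᵢ) ≤ τ(q)`, so `τ` vanishes on projections. Finally, for
`a ≥ 0` and a projection `P` of the approximate unit with `√a P ≈ √a`, the element `(a - ε)₊` is
dominated by `2 (√a y)* P (√a y)` for a suitable function `y` of `a`, whose trace is `0`; lower
semicontinuity gives `τ(a) = 0`.
-/

/-- `k(t)² t = (t - ε)₊` and `ε k(t)² ≤ (t - ε)₊`; the `max t ε` only keeps `k` continuous. -/
noncomputable def cutoffSqrt (ε t : ℝ) : ℝ := √(max (t - ε) 0 / max t ε)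

section cutoffSqrt

variable {ε : ℝ}

lemma continuous_cutoffSqrt (hε : 0 < ε) : Continuous (cutoffSqrt ε) :=
  (Continuous.div (by fun_prop) (by fun_prop) fun _ => (lt_max_of_lt_right hε).ne').sqrt

lemma cutoffSqrt_zero (hε : 0 < ε) : cutoffSqrt ε 0 = 0 := by
  simp [cutoffSqrt, hε.le]

lemma cutoffSqrt_mul_self (hε : 0 < ε) (t : ℝ) :
    cutoffSqrt ε t * cutoffSqrt ε t = max (t - ε) 0 / max t ε :=
  Real.mul_self_sqrt (div_nonneg (le_max_right _ _) (lt_max_of_lt_right hε).le)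

lemma cutoffSqrt_mul_mul_cutoffSqrt (hε : 0 < ε) (t : ℝ) :
    cutoffSqrt ε t * t * cutoffSqrt ε t = max (t - ε) 0 := by
  rw [mul_right_comm, cutoffSqrt_mul_self hε]
  rcases le_or_gt t ε with h | h
  · simp [max_eq_right (sub_nonpos.mpr h)]
  · rw [max_eq_left (sub_pos.mpr h).le, max_eq_left h.le, div_mul_cancel₀ _ (hε.trans h).ne']

lemma mul_cutoffSqrt_mul_self_le (hε : 0 < ε) (t : ℝ) :
    ε * (cutoffSqrt ε t * cutoffSqrt ε t) ≤ max (t - ε) 0 := by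
  rw [cutoffSqrt_mul_self hε, mul_div_left_comm]
  exact mul_le_of_le_one_right (le_max_right _ _)
    ((div_le_one (lt_max_of_lt_right hε)).mpr (le_max_right t ε))

end cutoffSqrt

lemma Matrix.isStarProjection_diagonal {R n : Type*} [NonUnitalSemiring R] [StarRing R]
    [Fintype n] [DecidableEq n] {d : n → R} (hd : ∀ i, IsStarProjection (d i)) :
    IsStarProjection (diagonal d) where
  isIdempotentElem := by
    simp [IsIdempotentElem, diagonal_mul_diagonal, fun i => (hd i).isIdempotentElem.eq]
  isSelfAdjoint := by
    simp [IsSelfAdjoint, star_eq_conjTranspose, diagonal_conjTranspose, Pi.star_def,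
      fun i => (hd i).isSelfAdjoint.star_eq]

section CStarAlgebra

variable {A : Type*} [NonUnitalCStarAlgebra A] [PartialOrder A] [StarOrderedRing A]

lemma cfcₙ_cutoffSqrt_mul_mul_cfcₙ_cutoffSqrt {ε : ℝ} (hε : 0 < ε) {a : A} (ha : 0 ≤ a) :
    cfcₙ (cutoffSqrt ε) a * a * cfcₙ (cutoffSqrt ε) a = cfcₙ (fun t : ℝ => max (t - ε) 0) a := by
  have hk := (continuous_cutoffSqrt hε).continuousOn (s := quasispectrum ℝ a)
  have hk0 := cutoffSqrt_zero hε
  rw [← cfcₙ_congr fun t _ => cutoffSqrt_mul_mul_cutoffSqrt hε t,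
    cfcₙ_mul (fun t => cutoffSqrt ε t * t) _ a
      ((continuous_cutoffSqrt hε).mul continuous_id).continuousOn (by simp [hk0]) hk hk0,
    cfcₙ_mul _ (fun t => t) a hk hk0 continuous_id.continuousOn rfl, cfcₙ_id' ℝ a]

lemma smul_cfcₙ_cutoffSqrt_mul_self_le {ε : ℝ} (hε : 0 < ε) (a : A) :
    ε • (cfcₙ (cutoffSqrt ε) a * cfcₙ (cutoffSqrt ε) a) ≤ cfcₙ (fun t : ℝ => max (t - ε) 0) a := by
  have hk := continuous_cutoffSqrt hε
  have hk0 := cutoffSqrt_zero hε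
  rw [← cfcₙ_mul _ _ a hk.continuousOn hk0 hk.continuousOn hk0,
    ← cfcₙ_smul ε (fun t => cutoffSqrt ε t * cutoffSqrt ε t) a (hk.mul hk).continuousOn
      (by simp [hk0])]
  exact cfcₙ_mono (fun t _ => mul_cutoffSqrt_mul_self_le hε t)
    (by fun_prop) (by fun_prop) (by simp [hk0]) (by simp [hε.le])

lemma exists_half_cfcₙ_sub_pos_le_conj {a c : A} (ha : 0 ≤ a) (hc : IsSelfAdjoint c) {ε : ℝ}
    (hε : 0 < ε) (hac : ‖a - c‖ ≤ ε / 2) :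
    ∃ y : A, IsSelfAdjoint y ∧
      (2⁻¹ : ℝ) • cfcₙ (fun t : ℝ => max (t - ε) 0) a ≤ y * c * y := by
  set f := cfcₙ (fun t : ℝ => max (t - ε) 0) a
  set y := cfcₙ (cutoffSqrt ε) a
  have hy : IsSelfAdjoint y := cfcₙ_predicate _ _
  have hyy : 0 ≤ y * y := by simpa [hy.star_eq] using star_mul_self_nonneg y
  have hsmall : y * (a - c) * y ≤ (2⁻¹ : ℝ) • f :=
    calc y * (a - c) * y ≤ ‖a - c‖ • (y * y) := by
          simpa [hy.star_eq] using
            CStarAlgebra.star_left_conjugate_le_norm_smul (a := y) (ha.isSelfAdjoint.sub hc)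
      _ ≤ (ε / 2) • (y * y) := smul_le_smul_of_nonneg_right hac hyy
      _ = (2⁻¹ : ℝ) • (ε • (y * y)) := by rw [smul_smul, div_eq_inv_mul]
      _ ≤ (2⁻¹ : ℝ) • f :=
          smul_le_smul_of_nonneg_left (smul_cfcₙ_cutoffSqrt_mul_self_le hε a) (by norm_num)
  refine ⟨y, hy, ?_⟩
  calc (2⁻¹ : ℝ) • f = f - (2⁻¹ : ℝ) • f := by module
    _ ≤ y * a * y - y * (a - c) * y := by
          rw [cfcₙ_cutoffSqrt_mul_mul_cfcₙ_cutoffSqrt hε ha]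
          exact sub_le_sub_left hsmall f
    _ = y * c * y := by noncomm_ring

namespace IsStarProjection

variable {q : A}

lemma star_conjugate_le (hq : IsStarProjection q) (x : A) : star x * q * x ≤ star x * x :=
  calc star x * q * x ≤ ‖q‖ • (star x * x) :=
        CStarAlgebra.star_left_conjugate_le_norm_smul hq.isSelfAdjoint
    _ ≤ (1 : ℝ) • (star x * x) :=
        smul_le_smul_of_nonneg_right (hq.norm_le q) (star_mul_self_nonneg x)
    _ = star x * x := one_smul ℝ _

lemma conjugate_le_norm_smul (hq : IsStarProjection q) {x : A} (hx : IsSelfAdjoint x) :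
    q * x * q ≤ ‖x‖ • q := by
  simpa [hq.isSelfAdjoint.star_eq, hq.isIdempotentElem.eq] using
    CStarAlgebra.star_left_conjugate_le_norm_smul (a := q) hx

lemma le_conjugate_of_norm_add_self_sub_le_one (hq : IsStarProjection q) {z : A}
    (hz : IsSelfAdjoint z) (h : ‖q + q - z‖ ≤ 1) : q ≤ q * z * q := by
  have hconj : q * (q + q - z) * q = q + q - q * z * q := by
    simp only [mul_add, mul_sub, add_mul, sub_mul, hq.isIdempotentElem.eq]
  have hle : q + q - q * z * q ≤ q :=
    calc q + q - q * z * q = q * (q + q - z) * q := hconj.symm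
      _ ≤ ‖q + q - z‖ • q :=
          hq.conjugate_le_norm_smul ((hq.isSelfAdjoint.add hq.isSelfAdjoint).sub hz)
      _ ≤ (1 : ℝ) • q := smul_le_smul_of_nonneg_right h hq.nonneg
      _ = q := one_smul ℝ q
  simpa using sub_le_comm.mp hle

end IsStarProjection

namespace Matrix

lemma eq_zero_of_conjTranspose_mul_self_eq_zero {m n : Type*} [Fintype m] {X : Matrix m n A}
    (h : Xᴴ * X = 0) : X = 0 := by
  ext i j
  have hj : ∑ k, star (X k j) * X k j = 0 := by
    simpa [mul_apply] using congr_fun (congr_fun h j) j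
  rw [Finset.sum_eq_zero_iff_of_nonneg fun k _ => star_mul_self_nonneg _] at hj
  exact (CStarRing.star_mul_self_eq_zero_iff _).mp (hj i (Finset.mem_univ i))

lemma isStarProjection_mul_star_self {n : Type*} [Fintype n] {v : Matrix n n A}
    (hv : IsStarProjection (star v * v)) :
    IsStarProjection (v * star v) := by
  set e := star v * v with he
  have hve : v * e = v := by
    refine sub_eq_zero.mp (eq_zero_of_conjTranspose_mul_self_eq_zero ?_)
    calc (v * e - v)ᴴ * (v * e - v) = star e * e * e - star e * e - e * e + e := by
          rw [← star_eq_conjTranspose, star_sub, star_mul, he]; noncomm_ring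
      _ = 0 := by
          rw [hv.isSelfAdjoint.star_eq, hv.isIdempotentElem.eq, hv.isIdempotentElem.eq]; abel
  refine ⟨?_, IsSelfAdjoint.mul_star_self v⟩
  calc v * star v * (v * star v) = v * e * star v := by rw [he]; noncomm_ring
    _ = v * star v := by rw [hve]

end Matrix

end CStarAlgebra

structure IsTrace {A : Type*} [NonUnitalCStarAlgebra A] [PartialOrder A] (τ : A → ℝ≥0∞) : Prop where
  map_add : ∀ a b : A, 0 ≤ a → 0 ≤ b → τ (a + b) = τ a + τ b
  map_zero : τ 0 = 0
  map_smul : ∀ a : A, 0 ≤ a → ∀ r : ℝ, 0 < r → τ ((r : ℂ) • a) = ENNReal.ofReal r * τ a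
  map_star_mul_self : ∀ x : A, τ (star x * x) = τ (x * star x)

namespace IsTrace

variable {A : Type*} [NonUnitalCStarAlgebra A] [PartialOrder A] {τ : A → ℝ≥0∞}

lemma map_real_smul (hτ : IsTrace τ) {x : A} (hx : 0 ≤ x) {r : ℝ} (hr : 0 ≤ r) :
    τ (r • x) = ENNReal.ofReal r * τ x := by
  rcases hr.eq_or_lt with rfl | hr
  · simp [hτ.map_zero]
  · rw [← Complex.coe_smul]
    exact hτ.map_smul x hx r hr

variable [StarOrderedRing A]

lemma mono (hτ : IsTrace τ) {x y : A} (hx : 0 ≤ x) (hxy : x ≤ y) : τ x ≤ τ y :=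
  calc τ x ≤ τ x + τ (y - x) := le_self_add
    _ = τ y := by rw [← hτ.map_add _ _ hx (sub_nonneg.mpr hxy), add_sub_cancel]

lemma map_sum (hτ : IsTrace τ) {ι : Type*} (s : Finset ι) {f : ι → A} (hf : ∀ i ∈ s, 0 ≤ f i) :
    τ (∑ i ∈ s, f i) = ∑ i ∈ s, τ (f i) := by
  classical
  induction s using Finset.induction_on with
  | empty => simp [hτ.map_zero]
  | insert i s hi ih =>
    rw [Finset.forall_mem_insert] at hf
    rw [Finset.sum_insert hi, Finset.sum_insert hi,
      hτ.map_add _ _ hf.1 (Finset.sum_nonneg hf.2), ih hf.2]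

lemma sum_map_diag_conjTranspose_mul_self (hτ : IsTrace τ) {m n : Type*} [Fintype m] [Fintype n]
    (v : Matrix m n A) : ∑ j, τ ((vᴴ * v) j j) = ∑ i, τ ((v * vᴴ) i i) := by
  simp only [Matrix.mul_apply, Matrix.conjTranspose_apply]
  calc ∑ j, τ (∑ i, star (v i j) * v i j) = ∑ j, ∑ i, τ (star (v i j) * v i j) :=
        Finset.sum_congr rfl fun j _ =>
          hτ.map_sum _ fun i _ => star_mul_self_nonneg _
    _ = ∑ i, ∑ j, τ (v i j * star (v i j)) := by
        rw [Finset.sum_comm]; simp only [hτ.map_star_mul_self]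
    _ = ∑ i, τ (∑ j, v i j * star (v i j)) :=
        Finset.sum_congr rfl fun i _ =>
          (hτ.map_sum _ fun j _ => mul_star_self_nonneg _).symm

lemma map_conjugate_le (hτ : IsTrace τ) {q d : A} (hq : IsStarProjection q) (hd : 0 ≤ d) :
    τ (q * d * q) ≤ τ d := by
  set u := CFC.sqrt d
  have hu : star u = u := (CFC.sqrt_nonneg d).isSelfAdjoint.star_eq
  have huu : u * u = d := CFC.sqrt_mul_sqrt_self d hd
  have hqq := hq.isIdempotentElem.eq
  calc τ (q * d * q) = τ (star (u * q) * (u * q)) := by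
        rw [star_mul, hu, hq.isSelfAdjoint.star_eq, ← huu]; noncomm_ring
    _ = τ (star u * q * u) := by
        rw [hτ.map_star_mul_self, star_mul, hu, hq.isSelfAdjoint.star_eq, mul_assoc u q,
          ← mul_assoc q, hqq, ← mul_assoc]
    _ ≤ τ (star u * u) :=
        hτ.mono (star_left_conjugate_nonneg hq.nonneg u) (hq.star_conjugate_le u)
    _ = τ d := by rw [hu, huu]

lemma map_star_conjugate_eq_zero (hτ : IsTrace τ) {p : A} (hp : IsStarProjection p) (hτp : τ p = 0)
    (x : A) : τ (star x * p * x) = 0 := by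
  have hp' := hp.isSelfAdjoint.star_eq
  refine le_antisymm ?_ zero_le
  calc τ (star x * p * x) = τ (star (p * x) * (p * x)) := by
        rw [star_mul, hp', ← mul_assoc, mul_assoc (star x) p p, hp.isIdempotentElem.eq]
    _ = τ (star p * (x * star x) * p) := by
        rw [hτ.map_star_mul_self, star_mul, hp']; noncomm_ring
    _ ≤ τ (‖x * star x‖ • p) := by
        refine hτ.mono (star_left_conjugate_nonneg (mul_star_self_nonneg x) p) ?_
        rw [hp']
        exact hp.conjugate_le_norm_smul (IsSelfAdjoint.mul_star_self x)
    _ = 0 := by rw [hτ.map_real_smul hp.nonneg (norm_nonneg _), hτp, mul_zero]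

lemma exists_add_star_le_of_mem_span (hτ : IsTrace τ) {y : A}
    (hy : y ∈ Submodule.span ℂ {a : A | 0 ≤ a ∧ τ a ≠ ⊤}) :
    ∃ d : A, 0 ≤ d ∧ τ d ≠ ⊤ ∧ y + star y ≤ d := by
  -- Bounding the real parts of all scalar multiples is what survives the `smul` step.
  suffices ∃ d : A, 0 ≤ d ∧ τ d ≠ ⊤ ∧ ∀ c : ℂ, c • y + star (c • y) ≤ ‖c‖ • d by
    obtain ⟨d, hd, hfin, hle⟩ := this
    exact ⟨d, hd, hfin, by simpa using hle 1⟩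
  induction hy using Submodule.span_induction with
  | mem x hx =>
    refine ⟨(2 : ℝ) • x, smul_nonneg zero_le_two hx.1, ?_, fun c => ?_⟩
    · rw [hτ.map_real_smul hx.1 zero_le_two]
      exact ENNReal.mul_ne_top ENNReal.ofReal_ne_top hx.2
    · have hre : c • x + star (c • x) = (2 * c.re) • x := by
        rw [star_smul, hx.1.isSelfAdjoint.star_eq, ← add_smul, Complex.star_def, Complex.add_conj,
          Complex.coe_smul]
      rw [hre, smul_smul, mul_comm]
      exact smul_le_smul_of_nonneg_right
        (mul_le_mul_of_nonneg_right (Complex.re_le_norm c) zero_le_two) hx.1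
  | zero => exact ⟨0, le_rfl, by rw [hτ.map_zero]; exact ENNReal.zero_ne_top, by simp⟩
  | add x z _ _ hx hz =>
    obtain ⟨d₁, hd₁, hfin₁, hle₁⟩ := hx
    obtain ⟨d₂, hd₂, hfin₂, hle₂⟩ := hz
    refine ⟨d₁ + d₂, add_nonneg hd₁ hd₂, ?_, fun c => ?_⟩
    · rw [hτ.map_add _ _ hd₁ hd₂]
      exact ENNReal.add_ne_top.mpr ⟨hfin₁, hfin₂⟩
    · calc c • (x + z) + star (c • (x + z)) = (c • x + star (c • x)) + (c • z + star (c • z)) := by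
            rw [smul_add, star_add]; abel
        _ ≤ ‖c‖ • d₁ + ‖c‖ • d₂ := add_le_add (hle₁ c) (hle₂ c)
        _ = ‖c‖ • (d₁ + d₂) := (smul_add _ _ _).symm
  | smul c₀ x _ hx =>
    obtain ⟨d, hd, hfin, hle⟩ := hx
    refine ⟨‖c₀‖ • d, smul_nonneg (norm_nonneg c₀) hd, ?_, fun c => ?_⟩
    · rw [hτ.map_real_smul hd (norm_nonneg c₀)]
      exact ENNReal.mul_ne_top ENNReal.ofReal_ne_top hfin
    · simpa [smul_smul, norm_mul] using hle (c * c₀)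

lemma map_ne_top_of_dense (hτ : IsTrace τ)
    (hdense : Dense (Submodule.span ℂ {a : A | 0 ≤ a ∧ τ a ≠ ⊤} : Set A)) {q : A}
    (hq : IsStarProjection q) : τ q ≠ ⊤ := by
  obtain ⟨y, hqy, hy⟩ := Metric.dense_iff.mp hdense q 2⁻¹ (by norm_num)
  rw [Metric.mem_ball, dist_comm, dist_eq_norm] at hqy
  obtain ⟨d, hd, hfin, hyd⟩ := hτ.exists_add_star_le_of_mem_span hy
  have hnorm : ‖q + q - (y + star y)‖ ≤ 1 :=
    calc ‖q + q - (y + star y)‖ = ‖(q - y) + star (q - y)‖ := by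
          rw [star_sub, hq.isSelfAdjoint.star_eq]; abel_nf
      _ ≤ ‖q - y‖ + ‖star (q - y)‖ := norm_add_le _ _
      _ ≤ 1 := by rw [norm_star]; linarith
  have hqd : q ≤ q * d * q := by
    refine (hq.le_conjugate_of_norm_add_self_sub_le_one ?_ hnorm).trans ?_
    · exact IsSelfAdjoint.add_star_self y
    · simpa [hq.isSelfAdjoint.star_eq] using star_left_conjugate_le_conjugate hyd q
  exact ne_top_of_le_ne_top hfin ((hτ.mono hq.nonneg hqd).trans (hτ.map_conjugate_le hq hd))

lemma card_mul_le_of_subequiv (hτ : IsTrace τ) {n : Type*} [Fintype n] [DecidableEq n] {p q : A}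
    (hp : IsStarProjection p) (hq : IsStarProjection q) {v : Matrix n n A} {i₀ : n}
    (hvv : star v * v = Matrix.diagonal fun _ => p)
    (hvq : v * star v * Matrix.single i₀ i₀ q = v * star v) :
    Fintype.card n * τ p ≤ τ q := by
  set w := v * star v
  have hw : IsStarProjection w := Matrix.isStarProjection_mul_star_self <|
    hvv ▸ Matrix.isStarProjection_diagonal (d := fun _ : n => p) fun _ => hp
  have hcol : ∀ i j, j ≠ i₀ → w i j = 0 := fun i j hj => by
    rw [← hvq]; exact Matrix.mul_single_apply_of_ne _ _ _ _ _ hj w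
  have hwq : w i₀ i₀ * q = w i₀ i₀ := by
    rw [← Matrix.mul_single_apply_same q i₀ i₀ i₀ w, hvq]
  have hw₀ : IsStarProjection (w i₀ i₀) := by
    refine ⟨?_, ?_⟩
    · have h := congr_fun (congr_fun hw.isIdempotentElem.eq i₀) i₀
      rwa [Matrix.mul_apply, Finset.sum_eq_single i₀ (fun k _ hk => by rw [hcol i₀ k hk, zero_mul])
        (by simp)] at h
    · show star (w i₀ i₀) = w i₀ i₀
      simpa using congr_fun (congr_fun hw.isSelfAdjoint.star_eq i₀) i₀
  calc Fintype.card n * τ p = ∑ j, τ ((vᴴ * v) j j) := by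
        simp [← Matrix.star_eq_conjTranspose, hvv]
    _ = ∑ i, τ (w i i) := hτ.sum_map_diag_conjTranspose_mul_self v
    _ = τ (w i₀ i₀) :=
        Finset.sum_eq_single i₀ (fun i _ hi => by rw [hcol i i hi, hτ.map_zero]) (by simp)
    _ ≤ τ q := hτ.mono hw₀.nonneg (hw₀.le_of_mul_eq_left hq hwq)

lemma map_eq_zero_of_forall_subequiv (hτ : IsTrace τ) {p q : A}
    (hp : IsStarProjection p) (hq : IsStarProjection q) (hτq : τ q ≠ ⊤)
    (hsub : ∀ n : ℕ, ∃ v : Matrix (Fin (n + 1)) (Fin (n + 1)) A,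
      star v * v = Matrix.diagonal (fun _ => p) ∧
      (v * star v) * Matrix.single 0 0 q = v * star v) :
    τ p = 0 := by
  by_contra hτp
  obtain ⟨n, hn⟩ := ENNReal.exists_nat_mul_gt hτp hτq
  obtain ⟨v, hvv, hvq⟩ := hsub n
  refine hn.not_ge (le_trans ?_ (hτ.card_mul_le_of_subequiv hp hq hvv hvq))
  gcongr
  simp

lemma map_cfcₙ_sub_pos_eq_zero (hτ : IsTrace τ) {a p : A} (ha : 0 ≤ a) (hp : IsStarProjection p)
    (hτp : τ p = 0) {ε : ℝ} (hε : 0 < ε) (hpa : ‖p * CFC.sqrt a - CFC.sqrt a‖ ^ 2 ≤ ε / 2) :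
    τ (cfcₙ (fun t : ℝ => max (t - ε) 0) a) = 0 := by
  set b := CFC.sqrt a
  have hb : star b = b := (CFC.sqrt_nonneg a).isSelfAdjoint.star_eq
  have hp' := hp.isSelfAdjoint.star_eq
  have hdiff : a - b * p * b = (b - b * p) * star (b - b * p) := by
    rw [star_sub, star_mul, hb, hp', ← CFC.sqrt_mul_sqrt_self a ha]
    calc b * b - b * p * b = b * b - b * p * b - b * p * b + b * (p * p) * b := by
          rw [hp.isIdempotentElem.eq]; abel
      _ = (b - b * p) * (b - p * b) := by noncomm_ring
  have hnorm : ‖a - b * p * b‖ ≤ ε / 2 := by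
    rwa [hdiff, CStarRing.norm_self_mul_star, ← sq, ← norm_star, star_sub, star_mul, hb, hp',
      ← norm_neg, neg_sub]
  have hc : IsSelfAdjoint (b * p * b) := by
    simpa [hb] using hp.isSelfAdjoint.conjugate b
  obtain ⟨y, hy, hle⟩ := exists_half_cfcₙ_sub_pos_le_conj ha hc hε hnorm
  have hconj : y * (b * p * b) * y = star (b * y) * p * (b * y) := by
    rw [star_mul, hb, hy.star_eq]; noncomm_ring
  have hf : 0 ≤ cfcₙ (fun t : ℝ => max (t - ε) 0) a := cfcₙ_nonneg fun t _ => le_max_right _ _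
  have h := hτ.mono (smul_nonneg (by norm_num) hf) hle
  rw [hconj, hτ.map_star_conjugate_eq_zero hp hτp, hτ.map_real_smul hf (by norm_num),
    nonpos_iff_eq_zero, mul_eq_zero] at h
  exact h.resolve_left (by simp)

end IsTrace

/-- Let `A` be a C*-algebra with an approximate unit of projections such that
every projection `p` admits a projection `q` with `p ⊗ 1ₙ ≾ q` for all `n`. Then every
densely defined lower semi-continuous trace on `A` is zero. -/
theorem stmt11 {A : Type u} [NonUnitalCStarAlgebra A] [PartialOrder A] [StarOrderedRing A]
    (hau : ∃ (Λ : Type u) (_ : Nonempty Λ) (le : Λ → Λ → Prop),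
      (∀ i j : Λ, ∃ k : Λ, le i k ∧ le j k) ∧
      ∃ p : Λ → A, (∀ i, IsIdempotentElem (p i) ∧ IsSelfAdjoint (p i)) ∧
        ∀ (a : A) (ε : ℝ), 0 < ε → ∃ i : Λ, ∀ j : Λ, le i j → ‖p j * a - a‖ < ε)
    (hsub : ∀ p : A, IsIdempotentElem p → IsSelfAdjoint p →
      ∃ q : A, IsIdempotentElem q ∧ IsSelfAdjoint q ∧
        ∀ n : ℕ, ∃ v : Matrix (Fin (n + 1)) (Fin (n + 1)) A,
          star v * v = Matrix.diagonal (fun _ => p) ∧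
          (v * star v) * Matrix.single 0 0 q = v * star v) :
    ∀ τ : A → ℝ≥0∞,
      (∀ a b : A, 0 ≤ a → 0 ≤ b → τ (a + b) = τ a + τ b) →
      (τ 0 = 0) →
      (∀ a : A, 0 ≤ a → ∀ r : ℝ, 0 < r → τ ((r : ℂ) • a) = ENNReal.ofReal r * τ a) →
      (∀ x : A, τ (star x * x) = τ (x * star x)) →
      (∀ a : A, 0 ≤ a →
        τ a = ⨆ ε : {ε : ℝ // 0 < ε}, τ (cfcₙ (fun t : ℝ => max (t - (ε : ℝ)) 0) a)) →
      Dense ((Submodule.span ℂ {a : A | 0 ≤ a ∧ τ a ≠ ⊤} : Submodule ℂ A) : Set A) →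
      ∀ a : A, 0 ≤ a → τ a = 0 := by
  intro τ hadd hzero hsmul htrace hsup hdense a ha
  have hτ : IsTrace τ := ⟨hadd, hzero, hsmul, htrace⟩
  obtain ⟨Λ, -, le, hdir, P, hP, happrox⟩ := hau
  have hPproj : ∀ i, IsStarProjection (P i) := fun i => ⟨(hP i).1, (hP i).2⟩
  have hτP : ∀ i, τ (P i) = 0 := fun i => by
    obtain ⟨q, hq₁, hq₂, hv⟩ := hsub (P i) (hP i).1 (hP i).2
    exact hτ.map_eq_zero_of_forall_subequiv (hPproj i) ⟨hq₁, hq₂⟩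
      (hτ.map_ne_top_of_dense hdense ⟨hq₁, hq₂⟩) hv
  rw [hsup a ha, ENNReal.iSup_eq_zero]
  rintro ⟨ε, hε⟩
  obtain ⟨i, hi⟩ := happrox (CFC.sqrt a) √(ε / 2) (by positivity)
  obtain ⟨j, hij, -⟩ := hdir i i -- `le` need not be reflexive
  refine hτ.map_cfcₙ_sub_pos_eq_zero ha (hPproj j) (hτP j) hε ?_
  calc ‖P j * CFC.sqrt a - CFC.sqrt a‖ ^ 2 ≤ √(ε / 2) ^ 2 := by gcongr; exact (hi j hij).le
    _ = ε / 2 := Real.sq_sqrt (by positivity)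
end

section
/- Let (αₙ)ₙ≥0 be an increasing sequence of strictly positive real numbers such that liminf_{n→∞} α_{n+m}/αₙ = 1 for every m ≥ 0. Then there exists a free ultrafilter ω on ℕ such that lim along ω of α_{n+m}/αₙ equals 1 for every m ≥ 1. -/
open Filter

private lemma freq_lt_of_liminf_eq_one {u : ℕ → ℝ} (h : liminf u atTop = 1) {b : ℝ}
    (hb : 1 < b) : ∃ᶠ n in atTop, u n < b := by
  by_contra hc
  rw [not_frequently] at hc
  have hev : ∀ᶠ n in atTop, b ≤ u n := hc.mono fun n hn => not_lt.1 hn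
  have hmem : b ∈ {a : ℝ | ∀ᶠ n in atTop, a ≤ u n} := hev
  have hlim : sSup {a : ℝ | ∀ᶠ n in atTop, a ≤ u n} = 1 := by
    rw [← Filter.liminf_eq, h]
  by_cases hbdd : BddAbove {a : ℝ | ∀ᶠ n in atTop, a ≤ u n}
  · have := le_csSup hbdd hmem
    rw [hlim] at this
    linarith
  · rw [Real.sSup_of_not_bddAbove hbdd] at hlim
    linarith

/-- If `(αₙ)` is an increasing sequence of strictly positive reals with
`liminf α_{n+m}/αₙ = 1` for every `m`, then there is a free ultrafilter `ω` on `ℕ` with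
`lim_ω α_{n+m}/αₙ = 1` for every `m ≥ 1`. -/
theorem stmt12 (α : ℕ → ℝ) (hmono : Monotone α) (hpos : ∀ n, 0 < α n)
    (h : ∀ m : ℕ, liminf (fun n => α (n + m) / α n) atTop = 1) :
    ∃ ω : Ultrafilter ℕ, (∀ s : Set ℕ, s.Finite → s ∉ ω) ∧
      ∀ m : ℕ, 1 ≤ m → Tendsto (fun n => α (n + m) / α n) (ω : Filter ℕ) (nhds 1) := by
  have hge : ∀ m n : ℕ, 1 ≤ α (n + m) / α n := fun m n =>
    (one_le_div (hpos n)).2 (hmono (Nat.le_add_right n m))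
  set B : ℕ → Set ℕ := fun k => {n | k ≤ n ∧ α (n + k) / α n ≤ 1 + 1 / (k + 1)} with hB
  have hdivmono : ∀ j k n : ℕ, j ≤ k → α (n + j) / α n ≤ α (n + k) / α n := fun j k n hjk =>
    div_le_div_of_nonneg_right (hmono (by omega)) (hpos n).le |>.trans_eq rfl
  have hfrac : ∀ j k : ℕ, j ≤ k → (1 : ℝ) / (k + 1) ≤ 1 / (j + 1) := by
    intro j k hjk
    apply one_div_le_one_div_of_le
    · positivity
    · exact_mod_cast Nat.succ_le_succ hjk
  have hBanti : Antitone B := by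
    intro j k hjk n hn
    refine ⟨le_trans hjk hn.1, ?_⟩
    calc α (n + j) / α n ≤ α (n + k) / α n := hdivmono j k n hjk
      _ ≤ 1 + 1 / (k + 1) := hn.2
      _ ≤ 1 + 1 / (j + 1) := by linarith [hfrac j k hjk]
  have hBne : ∀ k, (B k).Nonempty := by
    intro k
    have hδ : (0:ℝ) < 1 / (k + 1) := by positivity
    have hfreq : ∃ᶠ n in atTop, α (n + k) / α n < 1 + 1 / (k + 1) :=
      freq_lt_of_liminf_eq_one (h k) (by linarith)
    obtain ⟨n, hn1, hn2⟩ := (hfreq.and_eventually (eventually_ge_atTop k)).exists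
    exact ⟨n, hn2, hn1.le⟩
  have hF : (⨅ k, 𝓟 (B k)).NeBot := by
    refine iInf_neBot_of_directed ?_ fun k => principal_neBot_iff.2 (hBne k)
    exact (directed_of_isDirected_le fun j k hjk => principal_mono.2 (hBanti hjk))
  obtain ⟨ω, hω⟩ := Ultrafilter.exists_le (⨅ k, 𝓟 (B k))
  have hmem : ∀ k, B k ∈ ω := fun k => hω (mem_iInf_of_mem k (mem_principal_self _))
  refine ⟨ω, ?_, ?_⟩
  · intro s hs hsω
    obtain ⟨N, hN⟩ : ∃ N : ℕ, ∀ n ∈ s, n ≤ N := by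
      rcases hs.bddAbove with ⟨N, hN⟩
      exact ⟨N, fun n hn => hN hn⟩
    obtain ⟨n, hn, hns⟩ := Ultrafilter.nonempty_of_mem (ω.inter_mem (hmem (N + 1)) hsω)
    have h1 : N + 1 ≤ n := hn.1
    have h2 : n ≤ N := hN n hns
    omega
  · intro m hm
    rw [Metric.tendsto_nhds]
    intro ε hε
    obtain ⟨k, hk⟩ := exists_nat_one_div_lt hε
    filter_upwards [hmem (max k m)] with n hn
    have h1 : 1 ≤ α (n + m) / α n := hge m n
    have h2 : α (n + m) / α n ≤ 1 + 1 / (k + 1) := by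
      calc α (n + m) / α n ≤ α (n + max k m) / α n := hdivmono m _ n (le_max_right k m)
        _ ≤ 1 + 1 / (max k m + 1) := hn.2
        _ ≤ 1 + 1 / (k + 1) := by linarith [hfrac k (max k m) (le_max_left k m)]
    rw [Real.dist_eq, abs_lt]
    have hk' : (1:ℝ) / (k + 1) < ε := hk
    constructor <;> linarith
end

section
/- Let G be a group containing an infinite finitely generated subgroup. Then there is a finite subset S of G such that for every integer N ≥ 1 there exists a non-zero function ρ: G → ℕ with N·ρ(t) ≤ Σ_{s∈S} ρ(s⁻¹t) for all t ∈ G. -/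
/-!
Let `A ∋ 1` be a finite symmetric generating set of the infinite subgroup. The spheres
`A ^ (n + 1) \ A ^ n` are finite, and non-empty since otherwise the balls `A ^ n` would stabilise
at a finite submonoid containing the subgroup. Every point of a sphere is `a * x` with `a ∈ A` and
`x` in the previous sphere, so Kőnig's lemma gives a geodesic ray `u` with `u (n + 1) ∈ A * u n`. Putting weight `N ^ n` on `u n` and `0` elsewhere, each `u n` has the
neighbour `u (n + 1)` of weight `N` times its own.
-/

open Finset Pointwise Function

theorem exists_seq_forall_rel_of_finite {X : ℕ → Type*} [∀ n, Finite (X n)]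
    [∀ n, Nonempty (X n)] (R : ∀ n, X n → X (n + 1) → Prop) (hR : ∀ n y, ∃ x, R n x y) :
    ∃ t : ∀ n, X n, ∀ n, R n (t n) (t (n + 1)) := by
  choose f hf using hR
  let F := CategoryTheory.Functor.ofOpSequence fun n => TypeCat.ofHom (f n)
  have : ∀ j, Finite (F.obj j) := fun j => inferInstanceAs (Finite (X j.unop))
  have : ∀ j, Nonempty (F.obj j) := fun j => inferInstanceAs (Nonempty (X j.unop))
  obtain ⟨t, ht⟩ := nonempty_sections_of_finite_inverse_system F
  refine ⟨fun n => t ⟨n⟩, fun n => ?_⟩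
  have hproj : f n (t ⟨n + 1⟩) = t ⟨n⟩ := by
    have := ht (CategoryTheory.homOfLE (Nat.le_add_right n 1)).op
    rwa [CategoryTheory.Functor.ofOpSequence_map_homOfLE_succ] at this
  show R n (t ⟨n⟩) (t ⟨n + 1⟩)
  rw [← hproj]
  exact hf n _

theorem Submonoid.closure_subset_of_mul_subset {M : Type*} [Monoid M] {A B : Set M}
    (hB : 1 ∈ B) (hAB : A * B ⊆ B) : (closure A : Set M) ⊆ B := by
  suffices ∀ x ∈ closure A, ∀ b ∈ B, x * b ∈ B from
    fun x hx => by simpa using this x hx 1 hB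
  intro x hx
  induction hx using closure_induction with
  | mem a ha => exact fun b hb => hAB (Set.mul_mem_mul ha hb)
  | one => simp
  | mul x y _ _ hx hy => exact fun b hb => mul_assoc x y b ▸ hx _ (hy b hb)

section Spheres

variable {M : Type*} [Monoid M] [DecidableEq M] {A : Finset M}

theorem sdiff_pow_succ_nonempty (h1 : 1 ∈ A)
    (hA : (Submonoid.closure (A : Set M) : Set M).Infinite) (n : ℕ) :
    (A ^ (n + 1) \ A ^ n).Nonempty := by
  rw [sdiff_nonempty]
  intro hsub
  refine hA ((A ^ n).finite_toSet.subset (Submonoid.closure_subset_of_mul_subset ?_ ?_))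
  · exact one_mem_pow h1
  · rw [← coe_mul, ← pow_succ']
    exact_mod_cast hsub

theorem exists_mul_eq_of_mem_sdiff_pow {n : ℕ} {y : M} (hy : y ∈ A ^ (n + 2) \ A ^ (n + 1)) :
    ∃ x ∈ A ^ (n + 1) \ A ^ n, ∃ a ∈ A, y = a * x := by
  obtain ⟨hy, hy'⟩ := mem_sdiff.1 hy
  rw [pow_succ', mem_mul] at hy
  obtain ⟨a, ha, x, hx, rfl⟩ := hy
  refine ⟨x, mem_sdiff.2 ⟨hx, fun hxn => hy' ?_⟩, a, ha, rfl⟩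
  rw [pow_succ']
  exact mul_mem_mul ha hxn

theorem eq_of_mem_sdiff_pow (h1 : 1 ∈ A) {m n : ℕ} {x : M} (hm : x ∈ A ^ (m + 1) \ A ^ m)
    (hn : x ∈ A ^ (n + 1) \ A ^ n) : m = n := by
  have le : ∀ {i j}, x ∈ A ^ (i + 1) \ A ^ i → x ∈ A ^ (j + 1) \ A ^ j → i ≤ j :=
    fun hi hj => not_lt.1 fun hji =>
      (mem_sdiff.1 hi).2 (pow_subset_pow_right h1 hji (mem_sdiff.1 hj).1)
  exact le_antisymm (le hm hn) (le hn hm)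

theorem exists_injective_seq_succ_eq_mul (h1 : 1 ∈ A)
    (hA : (Submonoid.closure (A : Set M) : Set M).Infinite) :
    ∃ u : ℕ → M, Injective u ∧ ∀ n, ∃ a ∈ A, u (n + 1) = a * u n := by
  have : ∀ n, Nonempty ↥(A ^ (n + 1) \ A ^ n : Finset M) :=
    fun n => (sdiff_pow_succ_nonempty h1 hA n).coe_sort
  obtain ⟨t, ht⟩ := exists_seq_forall_rel_of_finite
    (X := fun n => ↥(A ^ (n + 1) \ A ^ n : Finset M))
    (fun _ x y => ∃ a ∈ A, y.1 = a * x.1) fun _ y => by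
      obtain ⟨x, hx, hxy⟩ := exists_mul_eq_of_mem_sdiff_pow y.2
      exact ⟨⟨x, hx⟩, hxy⟩
  refine ⟨fun n => t n, fun m n hmn => eq_of_mem_sdiff_pow h1 (t m).2 ?_, ht⟩
  simpa only [hmn] using (t n).2

end Spheres

theorem mul_extend_pow_le_sum {G : Type*} [Group G] {S : Finset G} {u : ℕ → G}
    (hu : Injective u) (hstep : ∀ n, ∃ s ∈ S, u (n + 1) = s⁻¹ * u n) (N : ℕ) (t : G) :
    N * extend u (N ^ ·) 0 t ≤ ∑ s ∈ S, extend u (N ^ ·) 0 (s⁻¹ * t) := by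
  by_cases ht : ∃ n, u n = t
  · obtain ⟨n, rfl⟩ := ht
    obtain ⟨s, hs, hsn⟩ := hstep n
    calc N * extend u (N ^ ·) 0 (u n) = extend u (N ^ ·) 0 (s⁻¹ * u n) := by
          rw [← hsn, hu.extend_apply, hu.extend_apply, pow_succ']
      _ ≤ ∑ s ∈ S, extend u (N ^ ·) 0 (s⁻¹ * u n) :=
          single_le_sum_of_canonicallyOrdered (f := fun s => extend u (N ^ ·) 0 (s⁻¹ * u n)) hs
  · rw [extend_apply' _ _ _ ht, Pi.zero_apply, mul_zero]
    exact Nat.zero_le _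

/-- If a group `G` contains an infinite finitely generated subgroup, then there
is a finite subset `S ⊆ G` such that for every `N ≥ 1` there is a non-zero `ρ : G → ℕ` with
`N·ρ(t) ≤ Σ_{s ∈ S} ρ(s⁻¹t)` for all `t`. -/
theorem stmt13 {G : Type*} [Group G]
    (h : ∃ H : Subgroup G, (H : Set G).Infinite ∧ H.FG) :
    ∃ S : Finset G, ∀ N : ℕ, 1 ≤ N → ∃ ρ : G → ℕ,
      (∃ t : G, ρ t ≠ 0) ∧ ∀ t : G, N * ρ t ≤ ∑ s ∈ S, ρ (s⁻¹ * t) := by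
  classical
  obtain ⟨_, hH, T, rfl⟩ := h
  set A : Finset G := insert 1 (T ∪ T⁻¹)
  have hA : (Submonoid.closure (A : Set G) : Set G).Infinite := by
    refine hH.mono ?_
    rw [← Subgroup.coe_toSubmonoid, Subgroup.closure_toSubmonoid]
    exact Submonoid.closure_mono (by simp [A, Set.subset_insert])
  obtain ⟨u, hu, hstep⟩ := exists_injective_seq_succ_eq_mul (mem_insert_self 1 _) hA
  have hstep' : ∀ n, ∃ s ∈ A⁻¹, u (n + 1) = s⁻¹ * u n := fun n => by
    obtain ⟨a, ha, hn⟩ := hstep n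
    exact ⟨a⁻¹, inv_mem_inv ha, by rwa [inv_inv]⟩
  exact ⟨A⁻¹, fun N _ => ⟨extend u (N ^ ·) 0, ⟨u 0, by simp [hu.extend_apply]⟩,
    mul_extend_pow_le_sum hu hstep' N⟩⟩
end

section
/- Let G be a countable group, ℓ: G → ℕ a proper length function, p ∈ ℓ∞(G, K) a projection, αₙ = max over t with ℓ(t) ≤ n of Tr(p(t)) (assumed strictly positive), and suppose liminf_{n→∞} α_{n+m}/αₙ = 1 for all m ≥ 0. Define for each n the trace τₙ(f) = (1/|Zₙ|) Σ_{t∈Zₙ} αₙ⁻¹ Tr(f(t)) where Zₙ = {t : ℓ(t) ≤ n, Tr(p(t)) = αₙ}, and let ω be a free ultrafilter with lim_ω α_{n+m}/αₙ = 1 for all m. Then τ_{ω,p}(f) := lim_ω τₙ(f) (limit in [0,∞]) satisfies τ_{ω,p}(p) = 1 and τ_{ω,p}(t.p) ≤ 1 for all t ∈ G. -/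
open scoped ENNReal
open Filter

/-- The Hilbert space `ℓ²(ℕ)`. -/
noncomputable abbrev HS : Type := lp (fun _ : ℕ => ℂ) 2

/-- The canonical trace of an operator on `HS` (values in `[0,∞]`). -/
noncomputable def TrH (T : HS →L[ℂ] HS) : ℝ≥0∞ :=
  ∑' i : ℕ, ENNReal.ofReal
    (RCLike.re (inner (𝕜 := ℂ) (lp.single 2 i (1 : ℂ)) (T (lp.single 2 i (1 : ℂ)))))

/-- Let `G` be a countable group with a proper length function `ℓ`, `p` a
projection in `ℓ∞(G, K)` with `αₙ = max_{ℓ(t) ≤ n} Tr(p(t))` strictly positive and of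
subexponentially growing dimension, `ω` a free ultrafilter with `lim_ω α_{n+m}/αₙ = 1`, and
`τₙ` the normalized averaging traces over `Zₙ = {t : ℓ(t) ≤ n, Tr(p(t)) = αₙ}`. Then
`τ_{ω,p}(p) = 1` and `τ_{ω,p}(t.p) ≤ 1` for all `t ∈ G`. -/
theorem stmt15 {G : Type*} [Group G] [Countable G]
    (ℓ : G → ℕ)
    (hℓ0 : ∀ t : G, ℓ t = 0 ↔ t = 1)
    (hℓsub : ∀ s t : G, ℓ (s * t) ≤ ℓ s + ℓ t)
    (hℓproper : ∀ n : ℕ, {t : G | ℓ t ≤ n}.Finite)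
    (p : G → HS →L[ℂ] HS)
    (hbdd : ∃ C : ℝ, ∀ t, ‖p t‖ ≤ C)
    (hcpt : ∀ t, IsCompactOperator (p t))
    (hproj : ∀ t, IsIdempotentElem (p t) ∧ IsSelfAdjoint (p t))
    (α : ℕ → ℝ≥0∞) (hα : ∀ n, α n = ⨆ t ∈ {t : G | ℓ t ≤ n}, TrH (p t))
    (hαpos : ∀ n, 0 < α n)
    (hsubexp : ∀ m : ℕ, liminf (fun n => α (n + m) / α n) atTop = 1)
    (ω : Ultrafilter ℕ) (hfree : ∀ s : Set ℕ, s.Finite → s ∉ ω)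
    (hω : ∀ m : ℕ, Tendsto (fun n => α (n + m) / α n) (ω : Filter ℕ) (nhds 1))
    (Z : ℕ → Set G) (hZ : ∀ n, Z n = {t : G | ℓ t ≤ n ∧ TrH (p t) = α n})
    (τ : ℕ → (G → HS →L[ℂ] HS) → ℝ≥0∞)
    (hτ : ∀ (n : ℕ) (f : G → HS →L[ℂ] HS),
      τ n f = ((Z n).ncard : ℝ≥0∞)⁻¹ * ∑' t : (Z n), (α n)⁻¹ * TrH (f t)) :
    Tendsto (fun n => τ n p) (ω : Filter ℕ) (nhds 1) ∧
    ∀ t : G, ∃ L : ℝ≥0∞, L ≤ 1 ∧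
      Tendsto (fun n => τ n fun s => p (t⁻¹ * s)) (ω : Filter ℕ) (nhds L) := by
    classical
  -- α is monotone
  have hmono : Monotone α := by
    intro a b hab
    rw [hα, hα]
    exact biSup_mono fun t ht => le_trans ht hab
  -- α n ≠ ⊤
  have hαtop : ∀ n, α n ≠ ⊤ := by
    intro n hn
    have h0 := hsubexp 0
    have hev : ∀ᶠ N in atTop, (fun n => α (n + 0) / α n) N = (0 : ℝ≥0∞) := by
      filter_upwards [eventually_ge_atTop n] with N hN
      have hNt : α N = ⊤ := top_le_iff.mp (hn ▸ hmono hN)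
      simp [hNt]
    rw [liminf_congr hev, liminf_const] at h0
    exact one_ne_zero h0.symm
  -- Z n is nonempty
  have hZne : ∀ n, (Z n).Nonempty := by
    intro n
    have hS : {t : G | ℓ t ≤ n}.Nonempty := ⟨1, by simp [Set.mem_setOf_eq, (hℓ0 1).mpr rfl]⟩
    have hmem : α n ∈ (fun t => TrH (p t)) '' {t : G | ℓ t ≤ n} := by
      have := Set.Nonempty.csSup_mem (hS.image fun t => TrH (p t))
        ((hℓproper n).image _)
      rwa [sSup_image, ← hα] at this
    obtain ⟨t, ht, hte⟩ := hmem
    exact ⟨t, by rw [hZ]; exact ⟨ht, hte⟩⟩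
  have hZfin : ∀ n, (Z n).Finite := by
    intro n
    apply (hℓproper n).subset
    rw [hZ]; exact fun t ht => ht.1
  have hncard : ∀ n, ((Z n).ncard : ℝ≥0∞) ≠ 0 ∧ ((Z n).ncard : ℝ≥0∞) ≠ ⊤ := by
    intro n
    exact ⟨Nat.cast_ne_zero.mpr ((hZne n).ncard_pos (hZfin n)).ne', ENNReal.natCast_ne_top _⟩
  -- tsum of constants over Z n
  have htsum_const : ∀ n (c : ℝ≥0∞), (∑' _ : (Z n), c) = ((Z n).ncard : ℝ≥0∞) * c := by
    intro n c
    haveI := (hZfin n).fintype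
    rw [tsum_fintype, Finset.sum_const, nsmul_eq_mul]
    congr 2
    exact (Nat.card_eq_fintype_card).symm.trans (Nat.card_coe_set_eq _)
  -- τ n p = 1
  have hτp : ∀ n, τ n p = 1 := by
    intro n
    have hterm : ∀ t : (Z n), (α n)⁻¹ * TrH (p t) = 1 := by
      rintro ⟨t, ht⟩
      rw [hZ] at ht
      rw [ht.2, ENNReal.inv_mul_cancel (hαpos n).ne' (hαtop n)]
    rw [hτ, tsum_congr hterm, htsum_const, mul_one,
      ENNReal.inv_mul_cancel (hncard n).1 (hncard n).2]
  constructor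
  · have he : (fun n => τ n p) = fun _ => (1 : ℝ≥0∞) := funext hτp
    rw [he]
    exact tendsto_const_nhds
  · intro t
    set g : ℕ → ℝ≥0∞ := fun n => τ n fun s => p (t⁻¹ * s) with hg
    obtain ⟨L, hL⟩ : ∃ L, Tendsto g (ω : Filter ℕ) (nhds L) :=
      ⟨(ω.map g).lim, (ω.map g).le_nhds_lim⟩
    refine ⟨L, ?_, hL⟩
    set m := ℓ t⁻¹ with hm
    have hbound : ∀ n, g n ≤ α (n + m) / α n := by
      intro n
      have hterm : ∀ s : (Z n), (α n)⁻¹ * TrH (p (t⁻¹ * s)) ≤ (α n)⁻¹ * α (n + m) := by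
        rintro ⟨s, hs⟩
        rw [hZ] at hs
        refine mul_le_mul_right ?_ _
        rw [hα (n + m)]
        have h1 := hs.1
        refine le_biSup (fun u => TrH (p u)) (show ℓ (t⁻¹ * s) ≤ n + m from ?_)
        exact le_trans (hℓsub t⁻¹ s) (by omega)
      calc g n = τ n (fun s => p (t⁻¹ * s)) := rfl
        _ = ((Z n).ncard : ℝ≥0∞)⁻¹ * ∑' s : (Z n), (α n)⁻¹ * TrH (p (t⁻¹ * s)) := hτ n _
        _ ≤ ((Z n).ncard : ℝ≥0∞)⁻¹ * ∑' _ : (Z n), (α n)⁻¹ * α (n + m) :=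
              mul_le_mul_right (ENNReal.tsum_le_tsum hterm) _
        _ = (α n)⁻¹ * α (n + m) := by
              rw [htsum_const, ← mul_assoc, ENNReal.inv_mul_cancel (hncard n).1 (hncard n).2,
                one_mul]
        _ = α (n + m) / α n := by rw [ENNReal.div_eq_inv_mul]
    exact le_of_tendsto_of_tendsto' hL (hω m) hbound
end

section
/- Let G be a group acting on a C*-algebra A, and let τ be a positive linear trace with domain the smallest G-invariant hereditary symmetric ideal J_A^G(e) containing a positive element e ∈ A. If sup_{t∈G} τ(α_t(e)) < ∞, then τ is bounded on the G-orbit of every element of J_A^G(e), i.e., sup_{t∈G} |τ(α_t(a))| < ∞ for all a ∈ J_A^G(e). -/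
/-!
Extend `τ` linearly to all of `A`. The elements of `J` on whose `G`-orbit `τ` stays bounded form
a `G`-invariant submodule `S`, hereditary because `τ` is monotone on positive elements of `J`, and
symmetric because `τ` is a trace. In a C⋆-algebra the span of the positive part of a hereditary
symmetric submodule `S` is a hereditary symmetric two-sided ⋆-ideal: for `0 ≤ a ∈ S` with
`b = √a`, polarization writes `y * a = (y * b) * b⋆` as a combination of the positive elements
`(y * b + iᵏ • b) * (y * b + iᵏ • b)⋆`, which lie in `S` by symmetry since
`(u + v)⋆ (u + v) ≤ 2 (u⋆ u + v⋆ v)` and `(y * b)⋆ (y * b) ≤ ‖y⋆ y‖ • a`.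
Minimality of `J` then puts `J` inside this span, hence inside `S`.
-/

open ComplexOrder Complex Submodule

theorem star_add_mul_add_le {R : Type*} [NonUnitalRing R] [StarRing R] [PartialOrder R]
    [StarOrderedRing R] (u v : R) :
    star (u + v) * (u + v) ≤ 2 • (star u * u + star v * v) := by
  have parallelogram : star (u + v) * (u + v) + star (u - v) * (u - v)
      = 2 • (star u * u + star v * v) := by
    rw [star_add, star_sub]; noncomm_ring
  exact parallelogram ▸ le_add_of_nonneg_right (star_mul_self_nonneg _)

theorem polarization_mul_star {A : Type*} [NonUnitalRing A] [StarRing A] [Module ℂ A]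
    [StarModule ℂ A] [IsScalarTower ℂ A A] [SMulCommClass ℂ A A] (u v : A) :
    (4 : ℂ) • (u * star v) =
      ∑ k : Fin 4,
        I ^ (k : ℕ) • ((u + I ^ (k : ℕ) • v) * star (u + I ^ (k : ℕ) • v)) := by
  simp only [Fin.sum_univ_four, star_add, star_smul, mul_add, add_mul, smul_add, mul_smul_comm,
    smul_mul_assoc, smul_smul]
  match_scalars <;> norm_num [Complex.ext_iff, pow_succ]

theorem exists_linearMap_eq_on {K V : Type*} [DivisionRing K] [AddCommGroup V] [Module K V]
    (J : Submodule K V) (τ : V → K) (hadd : ∀ a ∈ J, ∀ b ∈ J, τ (a + b) = τ a + τ b)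
    (hsmul : ∀ c : K, ∀ a ∈ J, τ (c • a) = c * τ a) :
    ∃ φ : V →ₗ[K] K, ∀ a ∈ J, φ a = τ a := by
  let τJ : J →ₗ[K] K :=
    { toFun := fun a => τ a
      map_add' := fun a b => hadd a a.2 b b.2
      map_smul' := fun c a => hsmul c a a.2 }
  obtain ⟨φ, hφ⟩ := LinearMap.exists_extend τJ
  exact ⟨φ, fun a ha => LinearMap.congr_fun hφ ⟨a, ha⟩⟩

def smulStarAlgHom {R G A : Type*} [Monoid R] [Monoid G] [NonUnitalNonAssocSemiring A] [Star A]
    [DistribMulAction R A] [DistribMulAction G A]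
    (hmul : ∀ (t : G) (x y : A), t • (x * y) = (t • x) * (t • y))
    (hstar : ∀ (t : G) (x : A), t • (star x) = star (t • x))
    (hsmul : ∀ (t : G) (c : R) (x : A), t • (c • x) = c • (t • x)) :
    G →* (A →⋆ₙₐ[R] A) where
  toFun t :=
    { toFun := (t • ·)
      map_smul' := hsmul t
      map_zero' := smul_zero t
      map_add' := smul_add t
      map_mul' := hmul t
      map_star' := hstar t }
  map_one' := by ext; exact one_smul G _
  map_mul' s t := by ext; exact mul_smul s t _

namespace Submodule

section Order

variable {R A : Type*} [Semiring R] [AddCommMonoid A] [Module R A]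

def IsHereditary [Preorder A] (S : Submodule R A) : Prop :=
  ∀ a b : A, 0 ≤ a → a ≤ b → b ∈ S → a ∈ S

def IsSymmetric [Mul A] [Star A] (S : Submodule R A) : Prop :=
  ∀ x : A, star x * x ∈ S → x * star x ∈ S

def spanNonneg [Preorder A] (S : Submodule R A) : Submodule R A :=
  span R {a | a ∈ S ∧ 0 ≤ a}

variable [Preorder A] {S : Submodule R A}

theorem spanNonneg_le : S.spanNonneg ≤ S :=
  span_le.mpr fun _ ha => ha.1

theorem mem_spanNonneg {a : A} (ha : a ∈ S) (ha₀ : 0 ≤ a) : a ∈ S.spanNonneg :=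
  subset_span ⟨ha, ha₀⟩

theorem IsHereditary.spanNonneg (hS : S.IsHereditary) : S.spanNonneg.IsHereditary :=
  fun a b ha hab hb => mem_spanNonneg (hS a b ha hab (spanNonneg_le hb)) ha

end Order

variable {A : Type*} [NonUnitalCStarAlgebra A] [PartialOrder A] [StarOrderedRing A]
  {S : Submodule ℂ A}

theorem IsSymmetric.spanNonneg (hS : S.IsSymmetric) : S.spanNonneg.IsSymmetric :=
  fun x hx => mem_spanNonneg (hS x (spanNonneg_le hx)) (mul_star_self_nonneg x)

theorem star_mem_spanNonneg {x : A} (hx : x ∈ S.spanNonneg) : star x ∈ S.spanNonneg := by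
  induction hx using span_induction with
  | mem a ha => rw [(IsSelfAdjoint.of_nonneg ha.2).star_eq]; exact subset_span ha
  | zero => simp
  | add y z _ _ hy hz => simpa using add_mem hy hz
  | smul c y _ hy => simpa using smul_mem _ (star c) hy

theorem map_mem_spanNonneg (f : A →⋆ₙₐ[ℂ] A) (hf : ∀ x ∈ S, f x ∈ S) {x : A}
    (hx : x ∈ S.spanNonneg) : f x ∈ S.spanNonneg :=
  (span_le (p := S.spanNonneg.comap (LinearMapClass.linearMap f))).mpr
    (fun a ha => mem_spanNonneg (hf a ha.1) (map_nonneg f ha.2)) hx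

theorem IsSymmetric.add_mul_star_add_mem (hsym : S.IsSymmetric) (hher : S.IsHereditary)
    {u v : A} (hu : star u * u ∈ S) (hv : star v * v ∈ S) : (u + v) * star (u + v) ∈ S :=
  hsym _ (hher _ _ (star_mul_self_nonneg _) (star_add_mul_add_le u v)
    (nsmul_mem (add_mem hu hv) 2))

theorem IsSymmetric.mul_mem_spanNonneg_of_nonneg (hsym : S.IsSymmetric) (hher : S.IsHereditary)
    {a : A} (ha : a ∈ S) (ha₀ : 0 ≤ a) (y : A) : y * a ∈ S.spanNonneg := by
  set b := CFC.sqrt a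
  have hb : star b = b := (IsSelfAdjoint.of_nonneg (CFC.sqrt_nonneg a)).star_eq
  have hbb : b * b = a := CFC.sqrt_mul_sqrt_self a ha₀
  have hyb : star (y * b) * (y * b) ∈ S := by
    have hle : star (y * b) * (y * b) ≤ ‖star y * y‖ • a := by
      simpa only [hb, hbb, star_mul, mul_assoc] using
        CStarAlgebra.star_left_conjugate_le_norm_smul (a := b) (IsSelfAdjoint.star_mul_self y)
    exact hher _ _ (star_mul_self_nonneg _) hle (S.smul_of_tower_mem _ ha)
  have hcb : ∀ k : ℕ, star (I ^ k • b) * (I ^ k • b) ∈ S := fun k => by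
    rw [star_smul, hb, smul_mul_smul_comm, star_def, conj_mul', norm_pow, norm_I]
    simpa [hbb] using ha
  have hya : y * a = (4 : ℂ)⁻¹ • (4 : ℂ) • ((y * b) * star b) := by
    rw [inv_smul_smul₀ four_ne_zero, hb, mul_assoc, hbb]
  rw [hya, polarization_mul_star]
  exact smul_mem _ _ <| sum_mem fun k _ => smul_mem _ _ <|
    mem_spanNonneg (hsym.add_mul_star_add_mem hher hyb (hcb k)) (mul_star_self_nonneg _)

theorem IsSymmetric.mul_mem_spanNonneg_left (hsym : S.IsSymmetric) (hher : S.IsHereditary)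
    (y : A) {x : A} (hx : x ∈ S.spanNonneg) : y * x ∈ S.spanNonneg :=
  (span_le (p := S.spanNonneg.comap (LinearMap.mulLeft ℂ y))).mpr
    (fun _ ha => hsym.mul_mem_spanNonneg_of_nonneg hher ha.1 ha.2 y) hx

theorem IsSymmetric.mul_mem_spanNonneg_right (hsym : S.IsSymmetric) (hher : S.IsHereditary)
    (y : A) {x : A} (hx : x ∈ S.spanNonneg) : x * y ∈ S.spanNonneg := by
  simpa using
    star_mem_spanNonneg (hsym.mul_mem_spanNonneg_left hher (star y) (star_mem_spanNonneg hx))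

end Submodule

section BoundedOrbits

variable {G A : Type*} [Monoid G] [NonUnitalCStarAlgebra A] [PartialOrder A]
  [StarOrderedRing A] (α : G →* (A →⋆ₙₐ[ℂ] A)) (φ : A →ₗ[ℂ] ℂ)

def boundedOrbits : Submodule ℂ A where
  carrier := {a | ∃ C : ℝ, ∀ t, ‖φ (α t a)‖ ≤ C}
  add_mem' := by
    rintro a b ⟨C, hC⟩ ⟨D, hD⟩
    refine ⟨C + D, fun t => ?_⟩
    simpa only [map_add] using (norm_add_le _ _).trans (add_le_add (hC t) (hD t))
  zero_mem' := ⟨0, by simp⟩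
  smul_mem' := by
    rintro c a ⟨C, hC⟩
    refine ⟨‖c‖ * C, fun t => ?_⟩
    simpa only [map_smul, smul_eq_mul, norm_mul] using
      mul_le_mul_of_nonneg_left (hC t) (norm_nonneg c)

theorem map_mem_boundedOrbits (s : G) {a : A} (ha : a ∈ boundedOrbits α φ) :
    α s a ∈ boundedOrbits α φ := by
  obtain ⟨C, hC⟩ := ha
  refine ⟨C, fun t => ?_⟩
  have hCts := hC (t * s)
  rw [map_mul] at hCts
  exact hCts

variable {J : Submodule ℂ A}

theorem norm_apply_le_of_le (hpos : ∀ a ∈ J, 0 ≤ a → 0 ≤ φ a) {a b : A} (ha : a ∈ J)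
    (hb : b ∈ J) (ha₀ : 0 ≤ a) (hab : a ≤ b) : ‖φ a‖ ≤ ‖φ b‖ := by
  have hφab : φ a ≤ φ b := by
    rw [← sub_nonneg, ← map_sub]
    exact hpos _ (sub_mem hb ha) (sub_nonneg.mpr hab)
  exact CStarAlgebra.norm_le_norm_of_nonneg_of_le (hpos a ha ha₀) hφab

theorem isHereditary_inf_boundedOrbits (hher : J.IsHereditary)
    (hinv : ∀ t, ∀ x ∈ J, α t x ∈ J) (hpos : ∀ a ∈ J, 0 ≤ a → 0 ≤ φ a) :
    (J ⊓ boundedOrbits α φ).IsHereditary := by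
  rintro a b ha hab ⟨hbJ, C, hC⟩
  have haJ := hher a b ha hab hbJ
  exact ⟨haJ, C, fun t => (norm_apply_le_of_le φ hpos (hinv t a haJ) (hinv t b hbJ)
    (map_nonneg _ ha) (OrderHomClass.mono _ hab)).trans (hC t)⟩

theorem isSymmetric_inf_boundedOrbits (hsym : J.IsSymmetric)
    (hinv : ∀ t, ∀ x ∈ J, α t x ∈ J)
    (htr : ∀ x : A, star x * x ∈ J → φ (star x * x) = φ (x * star x)) :
    (J ⊓ boundedOrbits α φ).IsSymmetric := by
  rintro x ⟨hxJ, C, hC⟩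
  refine ⟨hsym x hxJ, C, fun t => ?_⟩
  have htrt := htr (α t x) (by simpa only [map_mul, map_star] using hinv t _ hxJ)
  simpa only [map_mul, map_star, ← htrt] using hC t

end BoundedOrbits

theorem stmt19_general {A G : Type*} [NonUnitalCStarAlgebra A] [PartialOrder A] [StarOrderedRing A]
    [Group G] [DistribMulAction G A]
    (hactmul : ∀ (t : G) (x y : A), t • (x * y) = (t • x) * (t • y))
    (hactstar : ∀ (t : G) (x : A), t • (star x) = star (t • x))
    (hactsmul : ∀ (t : G) (c : ℂ) (x : A), t • (c • x) = c • (t • x))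
    (e : A) (hepos : 0 ≤ e)
    (J : Submodule ℂ A)
    (hJher : ∀ a b : A, 0 ≤ a → a ≤ b → b ∈ J → a ∈ J)
    (hJsym : ∀ x : A, star x * x ∈ J → x * star x ∈ J)
    (hJinv : ∀ (t : G), ∀ x ∈ J, t • x ∈ J)
    (heJ : e ∈ J)
    (hJmin : ∀ J' : Submodule ℂ A,
      (∀ x ∈ J', ∀ y : A, y * x ∈ J' ∧ x * y ∈ J') →
      (∀ x ∈ J', star x ∈ J') →
      (∀ a b : A, 0 ≤ a → a ≤ b → b ∈ J' → a ∈ J') →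
      (∀ x : A, star x * x ∈ J' → x * star x ∈ J') →
      (∀ (t : G), ∀ x ∈ J', t • x ∈ J') →
      e ∈ J' → J ≤ J')
    (τ : A → ℂ)
    (hadd : ∀ a ∈ J, ∀ b ∈ J, τ (a + b) = τ a + τ b)
    (hsmul : ∀ c : ℂ, ∀ a ∈ J, τ (c • a) = c * τ a)
    (hpos : ∀ a ∈ J, 0 ≤ a → 0 ≤ τ a)
    (htr : ∀ x : A, star x * x ∈ J → τ (star x * x) = τ (x * star x))
    (hbd : ∃ C : ℝ, ∀ t : G, ‖τ (t • e)‖ ≤ C) :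
    ∀ a ∈ J, ∃ C : ℝ, ∀ t : G, ‖τ (t • a)‖ ≤ C := by
  obtain ⟨φ, hφ⟩ := exists_linearMap_eq_on J τ hadd hsmul
  let α := smulStarAlgHom hactmul hactstar hactsmul
  set S := J ⊓ boundedOrbits α φ
  have hSher : S.IsHereditary := isHereditary_inf_boundedOrbits α φ hJher hJinv
    fun a ha ha₀ => hφ a ha ▸ hpos a ha ha₀
  have hSsym : S.IsSymmetric := isSymmetric_inf_boundedOrbits α φ hJsym hJinv
    fun x hx => by rw [hφ _ hx, hφ _ (hJsym x hx), htr x hx]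
  have heS : e ∈ S.spanNonneg := by
    obtain ⟨C, hC⟩ := hbd
    exact mem_spanNonneg ⟨heJ, C, fun t => hφ _ (hJinv t e heJ) ▸ hC t⟩ hepos
  have hJS : J ≤ S.spanNonneg :=
    hJmin _ (fun x hx y => ⟨hSsym.mul_mem_spanNonneg_left hSher y hx,
        hSsym.mul_mem_spanNonneg_right hSher y hx⟩)
      (fun _ => star_mem_spanNonneg) hSher.spanNonneg hSsym.spanNonneg
      (fun t _ => map_mem_spanNonneg (α t) fun y hy =>
        mem_inf.mpr ⟨hJinv t y hy.1, map_mem_boundedOrbits α φ t hy.2⟩)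
      heS
  intro a ha
  obtain ⟨C, hC⟩ := (spanNonneg_le (hJS ha)).2
  exact ⟨C, fun t => hφ _ (hJinv t a ha) ▸ hC t⟩

/-- Let `G` act on a C*-algebra `A` by *-automorphisms, let `J = J_A^G(e)` be
the smallest `G`-invariant hereditary symmetric ideal containing a positive element `e`, and
let `τ` be a positive linear trace with domain `J`. If `sup_t τ(t•e) < ∞` then `τ` is bounded
on the `G`-orbit of every element of `J`. -/
theorem stmt19 {A G : Type*} [NonUnitalCStarAlgebra A] [PartialOrder A] [StarOrderedRing A]
    [Group G] [DistribMulAction G A]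
    (hactmul : ∀ (t : G) (x y : A), t • (x * y) = (t • x) * (t • y))
    (hactstar : ∀ (t : G) (x : A), t • (star x) = star (t • x))
    (hactsmul : ∀ (t : G) (c : ℂ) (x : A), t • (c • x) = c • (t • x))
    (e : A) (hepos : 0 ≤ e)
    (J : Submodule ℂ A)
    (hJideal : ∀ x ∈ J, ∀ y : A, y * x ∈ J ∧ x * y ∈ J)
    (hJstar : ∀ x ∈ J, star x ∈ J)
    (hJher : ∀ a b : A, 0 ≤ a → a ≤ b → b ∈ J → a ∈ J)
    (hJsym : ∀ x : A, star x * x ∈ J → x * star x ∈ J)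
    (hJinv : ∀ (t : G), ∀ x ∈ J, t • x ∈ J)
    (heJ : e ∈ J)
    (hJmin : ∀ J' : Submodule ℂ A,
      (∀ x ∈ J', ∀ y : A, y * x ∈ J' ∧ x * y ∈ J') →
      (∀ x ∈ J', star x ∈ J') →
      (∀ a b : A, 0 ≤ a → a ≤ b → b ∈ J' → a ∈ J') →
      (∀ x : A, star x * x ∈ J' → x * star x ∈ J') →
      (∀ (t : G), ∀ x ∈ J', t • x ∈ J') →
      e ∈ J' → J ≤ J')
    (τ : A → ℂ)
    (hadd : ∀ a ∈ J, ∀ b ∈ J, τ (a + b) = τ a + τ b)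
    (hsmul : ∀ c : ℂ, ∀ a ∈ J, τ (c • a) = c * τ a)
    (hpos : ∀ a ∈ J, 0 ≤ a → 0 ≤ τ a)
    (htr : ∀ x : A, star x * x ∈ J → τ (star x * x) = τ (x * star x))
    (hbd : ∃ C : ℝ, ∀ t : G, ‖τ (t • e)‖ ≤ C) :
    ∀ a ∈ J, ∃ C : ℝ, ∀ t : G, ‖τ (t • a)‖ ≤ C :=
  stmt19_general hactmul hactstar hactsmul e hepos J hJher hJsym hJinv heJ hJmin τ hadd hsmul hpos
    htr hbd
end
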